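/- arXiv:2511.01119 — 6 statements merged into one kernel-verified Lean document; each statement's English description precedes it below -/
import Mathlib

section
/- Let θ be a collineation of PG(n,K) (n ≥ 2, K a skew field) such that no incident point-hyperplane pair is mapped to a special one, where pairs (p,H) and (p',H') with p∈H, p'∈H' are special if exactly one of the two incidences p ∈ H', p' ∈ H holds. Then for every point p with p ≠ p^θ, the line through p and p^θ is stabilised by θ, i.e., p^{θ²} lies on the line p p^θ. -/
/-- Points of the projective space `PG(n,K)`: `1`-dimensional subspaces of `K^{n+1}`,
modelled by the projectivization of the vector space `Fin (n+1) → K` over the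
(possibly skew) field `K`. -/
abbrev PGPoint (n : ℕ) (K : Type) [DivisionRing K] : Type :=
  Projectivization K (Fin (n + 1) → K)

/-- Hyperplanes of `PG(n,K)`: `n`-dimensional subspaces of `K^{n+1}`. -/
def PGHyp (n : ℕ) (K : Type) [DivisionRing K] : Type :=
  {W : Submodule K (Fin (n + 1) → K) // Module.finrank K W = n}

/-- Lines of `PG(n,K)`: `2`-dimensional subspaces of `K^{n+1}`. -/
def PGLine (n : ℕ) (K : Type) [DivisionRing K] : Type :=
  {W : Submodule K (Fin (n + 1) → K) // Module.finrank K W = 2}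

/-- Incidence between a point and a hyperplane of `PG(n,K)`. -/
def PGIncid {n : ℕ} {K : Type} [DivisionRing K] (p : PGPoint n K) (H : PGHyp n K) : Prop :=
  p.submodule ≤ H.1

/-- Two incident point-hyperplane flags `(p,H)`, `(p',H')` are *adjacent* (distance 1
in the long root subgroup geometry of type `A_n`) if they are distinct and share
either the point or the hyperplane. -/
def FlagAdj {n : ℕ} {K : Type} [DivisionRing K]
    (p p' : PGPoint n K) (H H' : PGHyp n K) : Prop :=
  (p ≠ p' ∨ H ≠ H') ∧ (p = p' ∨ H = H')

/-- Two flags `(p,H)`, `(p',H')` are *special* (distance 2') if exactly one of the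
cross-incidences `p ∈ H'`, `p' ∈ H` holds. -/
def FlagSpecial {n : ℕ} {K : Type} [DivisionRing K]
    (p p' : PGPoint n K) (H H' : PGHyp n K) : Prop :=
  Xor' (PGIncid p H') (PGIncid p' H)

/-- Two flags `(p,H)`, `(p',H')` are *symplectic* (distance 2) if both cross-incidences
hold and the flags are neither equal nor share the point or the hyperplane. -/
def FlagSymplectic {n : ℕ} {K : Type} [DivisionRing K]
    (p p' : PGPoint n K) (H H' : PGHyp n K) : Prop :=
  PGIncid p H' ∧ PGIncid p' H ∧ p ≠ p' ∧ H ≠ H'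

/-- Two flags `(p,H)`, `(p',H')` are *opposite* if neither cross-incidence holds. -/
def FlagOpp {n : ℕ} {K : Type} [DivisionRing K]
    (p p' : PGPoint n K) (H H' : PGHyp n K) : Prop :=
  ¬ PGIncid p H' ∧ ¬ PGIncid p' H

/-- A collineation of `PG(n,K)`, recorded by its (bijective) action on points and on
hyperplanes, preserving incidence. -/
structure PGCollineation (n : ℕ) (K : Type) [DivisionRing K] where
  ptMap : PGPoint n K ≃ PGPoint n K
  hypMap : PGHyp n K ≃ PGHyp n K
  incid_iff : ∀ (p : PGPoint n K) (H : PGHyp n K),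
    PGIncid p H ↔ PGIncid (ptMap p) (hypMap H)

/-- A duality of `PG(n,K)`: a bijection from points to hyperplanes together with a
bijection from hyperplanes to points, reversing incidence.  It sends an incident flag
`(p,H)` to the incident flag `(H^θ, p^θ)`. -/
structure PGDuality (n : ℕ) (K : Type) [DivisionRing K] where
  ptMap : PGPoint n K ≃ PGHyp n K
  hypMap : PGHyp n K ≃ PGPoint n K
  incid_iff : ∀ (p : PGPoint n K) (H : PGHyp n K),
    PGIncid p H ↔ PGIncid (hypMap H) (ptMap p)

/-!
If `p` and `p^θ` lie in a hyperplane `H`, then `p^θ` is incident with both `H` and `H^θ`, so the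
requirement that the flag `(p^θ, H)` is not mapped to a special flag forces `p^{θ²} ∈ H`. As the
line `p p^θ` is the intersection of the hyperplanes containing it, `p^{θ²}` lies on that line.
-/

namespace PGHyp

variable {n : ℕ} {K : Type} [DivisionRing K]

def ofKer (f : Module.Dual K (Fin (n + 1) → K)) (hf : f ≠ 0) : PGHyp n K :=
  ⟨LinearMap.ker f, by
    have h := f.finrank_ker_add_one_of_ne_zero hf
    rw [Module.finrank_fin_fun] at h
    omega⟩

end PGHyp

namespace Projectivization

variable {n : ℕ} {K : Type} [DivisionRing K]

theorem submodule_le_of_forall_incid (q : PGPoint n K) (W : Submodule K (Fin (n + 1) → K))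
    (h : ∀ H : PGHyp n K, W ≤ H.1 → PGIncid q H) : q.submodule ≤ W := by
  rw [submodule_eq, Submodule.span_singleton_le_iff_mem]
  by_contra hq
  obtain ⟨f, hfq, hWf⟩ := Submodule.exists_le_ker_of_notMem hq
  have hq_ker : q.submodule ≤ LinearMap.ker f :=
    h (PGHyp.ofKer f (ne_of_apply_ne (· q.rep) hfq)) hWf
  rw [submodule_eq, Submodule.span_singleton_le_iff_mem] at hq_ker
  exact hfq hq_ker

end Projectivization

namespace PGCollineation

variable {n : ℕ} {K : Type} [DivisionRing K]

def IsPolarKangaroo (θ : PGCollineation n K) : Prop :=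
  ∀ (p : PGPoint n K) (H : PGHyp n K), PGIncid p H →
    ¬ FlagSpecial p (θ.ptMap p) H (θ.hypMap H)

theorem IsPolarKangaroo.incid_ptMap_ptMap {θ : PGCollineation n K} (hθ : θ.IsPolarKangaroo)
    {p : PGPoint n K} {H : PGHyp n K} (hp : PGIncid p H) (hθp : PGIncid (θ.ptMap p) H) :
    PGIncid (θ.ptMap (θ.ptMap p)) H :=
  ((not_xor _ _).mp (hθ _ H hθp)).mp ((θ.incid_iff p H).mp hp)

end PGCollineation

theorem stmt_1_general (n : ℕ) (K : Type) [DivisionRing K]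
    (θ : PGCollineation n K)
    (hkang : ∀ (p : PGPoint n K) (H : PGHyp n K), PGIncid p H →
      ¬ FlagSpecial p (θ.ptMap p) H (θ.hypMap H)) :
    ∀ p : PGPoint n K, θ.ptMap p ≠ p →
      (θ.ptMap (θ.ptMap p)).submodule ≤ p.submodule ⊔ (θ.ptMap p).submodule := by
  intro p _
  have hθ : θ.IsPolarKangaroo := hkang
  refine (θ.ptMap (θ.ptMap p)).submodule_le_of_forall_incid _ fun H hH => ?_
  exact hθ.incid_ptMap_ptMap (le_sup_left.trans hH) (le_sup_right.trans hH)

/-- If a collineation `θ` of `PG(n,K)` (`n ≥ 2`) maps no incident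
point-hyperplane flag to a special flag, then for every point `p` with `p ≠ p^θ`
the line `p p^θ` is stabilised: `p^{θ²}` lies on the line through `p` and `p^θ`. -/
theorem stmt_1 (n : ℕ) (hn : 2 ≤ n) (K : Type) [DivisionRing K]
    (θ : PGCollineation n K)
    (hkang : ∀ (p : PGPoint n K) (H : PGHyp n K), PGIncid p H →
      ¬ FlagSpecial p (θ.ptMap p) H (θ.hypMap H)) :
    ∀ p : PGPoint n K, θ.ptMap p ≠ p →
      (θ.ptMap (θ.ptMap p)).submodule ≤ p.submodule ⊔ (θ.ptMap p).submodule :=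
  stmt_1_general n K θ hkang
end

section
/- Let θ be a duality of PG(n,K) which is a polar {1,2'}-kangaroo (maps no incident point-hyperplane flag to an adjacent or special flag). Suppose θ fixes some flag (p₀, H₀), meaning p₀^θ = H₀ and H₀^θ = p₀. Then every point p lying in H₀ satisfies p ∈ p^θ. -/
/-- Let `θ` be a duality of `PG(n,K)` (`n ≥ 2`) which is a polar
`{1,2'}`-kangaroo (maps no incident flag to an adjacent or special flag), and suppose
`θ` fixes a flag `(p₀,H₀)` (i.e. `p₀^θ = H₀` and `H₀^θ = p₀`).  Then every point `p`
lying in `H₀` satisfies `p ∈ p^θ`. -/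
theorem stmt_4 (n : ℕ) (hn : 2 ≤ n) (K : Type) [DivisionRing K]
    (θ : PGDuality n K)
    (hkang : ∀ (p : PGPoint n K) (H : PGHyp n K), PGIncid p H →
      ¬ FlagAdj p (θ.hypMap H) H (θ.ptMap p) ∧
      ¬ FlagSpecial p (θ.hypMap H) H (θ.ptMap p))
    (p₀ : PGPoint n K) (H₀ : PGHyp n K) (hflag : PGIncid p₀ H₀)
    (h1 : θ.ptMap p₀ = H₀) (h2 : θ.hypMap H₀ = p₀) :
    ∀ p : PGPoint n K, PGIncid p H₀ → PGIncid p (θ.ptMap p) := by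
  intro p hp
  have h := (hkang p H₀ hp).2
  rw [h2] at h
  by_contra hne
  exact h (Or.inr ⟨hflag, hne⟩)
end

section
/- Let Γ be a polar space of rank n ≥ 2 such that every submaximal singular subspace lies in exactly two maximal singular subspaces (hyperbolic polar space), and let θ be a collineation with the property that there exists k, 0 ≤ k ≤ n−1, such that for every maximal singular subspace M, the intersection M ∩ M^θ has projective dimension exactly k. If k ≥ 1, then θ is ℓ-domestic for every ℓ ≥ n−k−1; that is, no singular subspace of projective dimension ℓ ≥ n−k−1 is mapped by θ to an opposite singular subspace. -/
/-- An abstract polar space: a partial linear point-line geometry with thick lines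
satisfying the Buekenhout–Shult one-or-all axiom.  `col` is the collinearity
relation (reflexive by convention: a point is collinear with itself). -/
structure PolarSpace where
  Point : Type
  Line : Set (Set Point)
  col : Point → Point → Prop
  col_iff : ∀ p q : Point, col p q ↔ (p = q ∨ ∃ L ∈ Line, p ∈ L ∧ q ∈ L)
  partial_linear : ∀ L ∈ Line, ∀ M ∈ Line, ∀ p q : Point,
    p ≠ q → p ∈ L → q ∈ L → p ∈ M → q ∈ M → L = M
  thick : ∀ L ∈ Line, ∃ p ∈ L, ∃ q ∈ L, ∃ r ∈ L, p ≠ q ∧ p ≠ r ∧ q ≠ r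
  one_or_all : ∀ p : Point, ∀ L ∈ Line,
    (∃! q, q ∈ L ∧ col p q) ∨ (∀ q ∈ L, col p q)

namespace PolarSpace

variable (Γ : PolarSpace)

/-- A collineation of a polar space: a bijection of the point set mapping lines to
lines (in both directions). -/
structure Collineation where
  toFun : Γ.Point → Γ.Point
  bijective : Function.Bijective toFun
  map_line : ∀ L ∈ Γ.Line, toFun '' L ∈ Γ.Line
  map_line_pre : ∀ L ∈ Γ.Line, toFun ⁻¹' L ∈ Γ.Line

/-- A *singular subspace*: a set of pairwise collinear points which is a subspace
(contains every line having two distinct points in it). -/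
def Singular (S : Set Γ.Point) : Prop :=
  (∀ p ∈ S, ∀ q ∈ S, Γ.col p q) ∧
  ∀ L ∈ Γ.Line, (∃ p ∈ L ∩ S, ∃ q ∈ L ∩ S, p ≠ q) → L ⊆ S

/-- `S` admits a strictly increasing chain of `k+1` nonempty singular subspaces
ending at `S` (so `S` has projective dimension at least `k`). -/
def HasChain (S : Set Γ.Point) (k : ℕ) : Prop :=
  ∃ c : Fin (k + 1) → Set Γ.Point,
    (∀ i, (c i).Nonempty ∧ Γ.Singular (c i)) ∧
    (∀ i j : Fin (k + 1), i < j → c i ⊂ c j) ∧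
    c (Fin.last k) = S

/-- `S` has projective dimension exactly `k`. -/
def ProjDim (S : Set Γ.Point) (k : ℕ) : Prop :=
  Γ.HasChain S k ∧ ¬ Γ.HasChain S (k + 1)

/-- A maximal singular subspace. -/
def MaxSingular (S : Set Γ.Point) : Prop :=
  S.Nonempty ∧ Γ.Singular S ∧ ∀ T, Γ.Singular T → S ⊆ T → T = S

/-- Two singular subspaces (of the same dimension) are *opposite* if no point of
either is collinear with all points of the other. -/
def Opp (U W : Set Γ.Point) : Prop :=
  (∀ p ∈ U, ¬ ∀ q ∈ W, Γ.col p q) ∧ (∀ q ∈ W, ¬ ∀ p ∈ U, Γ.col q p)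

/-- Two distinct lines are *coplanar* (adjacent) iff they meet in a point and every
point of one is collinear with every point of the other (equivalently, they lie in
a common singular plane). -/
def Coplanar (L M : Set Γ.Point) : Prop :=
  L ≠ M ∧ (∃ p, p ∈ L ∧ p ∈ M) ∧ ∀ p ∈ L, ∀ q ∈ M, Γ.col p q

/-- Two lines form a *special* pair iff there is a unique point on each collinear
with all points of the other. -/
def SpecialLines (L M : Set Γ.Point) : Prop :=
  L ≠ M ∧ (∃! p, p ∈ L ∧ ∀ q ∈ M, Γ.col p q) ∧ (∃! q, q ∈ M ∧ ∀ p ∈ L, Γ.col q p)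

/-- Two lines are *opposite* iff every point of each is collinear with exactly one
point of the other. -/
def OppLines (L M : Set Γ.Point) : Prop :=
  (∀ p ∈ L, ∃! q, q ∈ M ∧ Γ.col p q) ∧ (∀ q ∈ M, ∃! p, p ∈ L ∧ Γ.col q p)

end PolarSpace

section Aux

variable {Γ : PolarSpace}

lemma col_refl (p : Γ.Point) : Γ.col p p := (Γ.col_iff p p).2 (Or.inl rfl)

lemma col_symm {p q : Γ.Point} (h : Γ.col p q) : Γ.col q p := by
  rcases (Γ.col_iff p q).1 h with rfl | ⟨L, hL, hp, hq⟩
  · exact col_refl p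
  · exact (Γ.col_iff q p).2 (Or.inr ⟨L, hL, hq, hp⟩)

lemma exists_line {p q : Γ.Point} (h : Γ.col p q) (hne : p ≠ q) :
    ∃ L ∈ Γ.Line, p ∈ L ∧ q ∈ L := by
  rcases (Γ.col_iff p q).1 h with rfl | h
  · exact absurd rfl hne
  · exact h

lemma col2all {p : Γ.Point} {L : Set Γ.Point} (hL : L ∈ Γ.Line)
    {a b : Γ.Point} (ha : a ∈ L) (hb : b ∈ L) (hab : a ≠ b)
    (hpa : Γ.col p a) (hpb : Γ.col p b) : ∀ x ∈ L, Γ.col p x := by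
  rcases Γ.one_or_all p L hL with ⟨u, _, huniq⟩ | hall
  · exact absurd ((huniq a ⟨ha, hpa⟩).trans (huniq b ⟨hb, hpb⟩).symm) hab
  · exact hall

lemma map_col (θ : Γ.Collineation) {a b : Γ.Point} (h : Γ.col a b) :
    Γ.col (θ.toFun a) (θ.toFun b) := by
  rcases (Γ.col_iff a b).1 h with rfl | ⟨L, hL, ha, hb⟩
  · exact col_refl _
  · exact (Γ.col_iff _ _).2 (Or.inr ⟨θ.toFun '' L, θ.map_line L hL, ⟨a, ha, rfl⟩, ⟨b, hb, rfl⟩⟩)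

lemma chain_le {m : ℕ} {c : Fin (m + 1) → Set Γ.Point}
    (hmono : ∀ i j : Fin (m + 1), i < j → c i ⊂ c j)
    {i j : Fin (m + 1)} (h : i ≤ j) : c i ⊆ c j := by
  rcases lt_or_eq_of_le h with h | h
  · exact (hmono i j h).subset
  · rw [h]

lemma hasChain_nonempty {S : Set Γ.Point} {m : ℕ} (h : Γ.HasChain S m) : S.Nonempty := by
  obtain ⟨c, h1, _, h3⟩ := h
  exact h3 ▸ (h1 _).1

lemma hasChain_trunc {S : Set Γ.Point} {m m' : ℕ} (h : Γ.HasChain S m) (hle : m' ≤ m) :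
    Γ.HasChain S m' := by
  obtain ⟨c, h1, h2, h3⟩ := h
  refine ⟨fun i => c ⟨i.val + (m - m'), by omega⟩, fun i => h1 _, ?_, ?_⟩
  · intro i j hij
    rw [Fin.lt_def] at hij
    exact h2 _ _ (by simp only [Fin.mk_lt_mk]; omega)
  · have he : (⟨(Fin.last m').val + (m - m'), by omega⟩ : Fin (m + 1)) = Fin.last m := by
      apply Fin.ext
      simp [Fin.last]
      omega
    calc (fun i => c ⟨i.val + (m - m'), by omega⟩) (Fin.last m') = c (Fin.last m) := by
          apply congrArg; apply Fin.ext; simp [Fin.last]; omega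
      _ = S := h3

lemma hasChain_append {S T : Set Γ.Point} {m : ℕ} (h : Γ.HasChain S m) (hST : S ⊂ T)
    (hT : Γ.Singular T) : Γ.HasChain T (m + 1) := by
  obtain ⟨c, h1, h2, h3⟩ := h
  have hSne : S.Nonempty := by rw [← h3]; exact (h1 _).1
  have hTne : T.Nonempty := hSne.mono hST.subset
  refine ⟨fun i => if hi : i.val < m + 1 then c ⟨i.val, hi⟩ else T, fun i => ?_, ?_, ?_⟩
  · dsimp only
    split
    · exact h1 _
    · exact ⟨hTne, hT⟩
  · intro i j hij
    rw [Fin.lt_def] at hij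
    dsimp only
    by_cases hj : j.val < m + 1
    · have hi : i.val < m + 1 := by omega
      rw [dif_pos hi, dif_pos hj]
      exact h2 _ _ (by simp only [Fin.mk_lt_mk]; omega)
    · have hi : i.val < m + 1 := by have := j.isLt; omega
      rw [dif_pos hi, dif_neg hj]
      refine lt_of_le_of_lt ?_ hST
      rw [← h3]
      exact chain_le h2 (by rw [Fin.le_def]; simp [Fin.last]; omega)
  · dsimp only
    rw [dif_neg (by simp [Fin.last])]

lemma exists_maxSingular {W : Set Γ.Point} (hW : Γ.Singular W) (hWne : W.Nonempty) :
    ∃ M, Γ.MaxSingular M ∧ W ⊆ M := by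
  have H : ∀ c ⊆ {S | Γ.Singular S ∧ W ⊆ S}, IsChain (· ⊆ ·) c → c.Nonempty →
      ∃ ub ∈ {S | Γ.Singular S ∧ W ⊆ S}, ∀ s ∈ c, s ⊆ ub := by
    intro c hcS hchain hcne
    refine ⟨⋃₀ c, ⟨⟨?_, ?_⟩, ?_⟩, fun s hs => Set.subset_sUnion_of_mem hs⟩
    · rintro p ⟨s, hs, hps⟩ q ⟨t, ht, hqt⟩
      by_cases hst : s = t
      · exact (hcS ht).1.1 p (hst ▸ hps) q hqt
      · rcases hchain hs ht hst with h | h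
        · exact (hcS ht).1.1 p (h hps) q hqt
        · exact (hcS hs).1.1 p hps q (h hqt)
    · rintro L hL ⟨p, ⟨hpL, s, hs, hps⟩, q, ⟨hqL, t, ht, hqt⟩, hpq⟩
      by_cases hst : s = t
      · exact ((hcS ht).1.2 L hL ⟨p, ⟨hpL, hst ▸ hps⟩, q, ⟨hqL, hqt⟩, hpq⟩).trans
          (Set.subset_sUnion_of_mem ht)
      · rcases hchain hs ht hst with h | h
        · exact ((hcS ht).1.2 L hL ⟨p, ⟨hpL, h hps⟩, q, ⟨hqL, hqt⟩, hpq⟩).trans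
            (Set.subset_sUnion_of_mem ht)
        · exact ((hcS hs).1.2 L hL ⟨p, ⟨hpL, hps⟩, q, ⟨hqL, h hqt⟩, hpq⟩).trans
            (Set.subset_sUnion_of_mem hs)
    · obtain ⟨s, hs⟩ := hcne
      exact (hcS hs).2.trans (Set.subset_sUnion_of_mem hs)
  obtain ⟨M, hWM, hMmax⟩ :=
    zorn_subset_nonempty {S | Γ.Singular S ∧ W ⊆ S} H W ⟨hW, subset_rfl⟩
  have hMmem : Γ.Singular M ∧ W ⊆ M := hMmax.1
  refine ⟨M, ⟨hWne.mono hMmem.2, hMmem.1, ?_⟩, hMmem.2⟩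
  intro T hT hMT
  exact subset_antisymm (hMmax.2 ⟨hT, hMmem.2.trans hMT⟩ hMT) hMT

end Aux

section Hyp

variable {Γ : PolarSpace}

lemma hyperplane_cut {M H S : Set Γ.Point} (hSM : S ⊆ M)
    (h1 : ∀ L ∈ Γ.Line, L ⊆ M → ∃ x ∈ L, x ∈ H)
    (h2 : ∀ L ∈ Γ.Line, L ⊆ M → ∀ a ∈ L, a ∈ H → ∀ b ∈ L, b ∈ H → a ≠ b → L ⊆ H)
    {d : ℕ} (hd : 1 ≤ d) (hc : Γ.HasChain S d) : Γ.HasChain (S ∩ H) (d - 1) := by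
  obtain ⟨c, hcns, hcmono, hclast⟩ := hc
  have hsub : ∀ i : Fin (d + 1), c i ⊆ S := fun i => by
    rw [← hclast]; exact chain_le hcmono (Fin.le_last i)
  have hsing : ∀ i : Fin (d + 1), Γ.Singular (c i ∩ H) := by
    intro i
    constructor
    · intro p hp q hq; exact (hcns i).2.1 p hp.1 q hq.1
    · rintro L hL ⟨p, ⟨hpL, hp⟩, q, ⟨hqL, hq⟩, hpq⟩
      have hLc : L ⊆ c i := (hcns i).2.2 L hL ⟨p, ⟨hpL, hp.1⟩, q, ⟨hqL, hq.1⟩, hpq⟩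
      have hLH : L ⊆ H := h2 L hL (hLc.trans ((hsub i).trans hSM)) p hpL hp.2 q hqL hq.2 hpq
      exact fun x hx => ⟨hLc hx, hLH hx⟩
  have hline : ∀ (i : Fin (d + 1)) (x y : Γ.Point), x ∈ c i → y ∈ c i → x ≠ y →
      ∃ L ∈ Γ.Line, x ∈ L ∧ y ∈ L ∧ L ⊆ c i := by
    intro i x y hx hy hxy
    obtain ⟨L, hL, hxL, hyL⟩ := exists_line ((hcns i).2.1 x hx y hy) hxy
    exact ⟨L, hL, hxL, hyL, (hcns i).2.2 L hL ⟨x, ⟨hxL, hx⟩, y, ⟨hyL, hy⟩, hxy⟩⟩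
  have hne1 : ∀ i : Fin (d + 1), 1 ≤ i.val → (c i ∩ H).Nonempty := by
    intro i hi
    have h01 : c ⟨0, by omega⟩ ⊂ c ⟨1, by omega⟩ := hcmono _ _ (by simp [Fin.lt_def])
    obtain ⟨p, hp⟩ := (hcns ⟨0, by omega⟩).1
    obtain ⟨r, hr, hrn⟩ := Set.exists_of_ssubset h01
    obtain ⟨L, hL, _, hrL, hLc⟩ := hline ⟨1, by omega⟩ p r (h01.subset hp) hr
      (by rintro rfl; exact hrn hp)
    obtain ⟨x, hxL, hxH⟩ := h1 L hL (hLc.trans ((hsub _).trans hSM))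
    have h1i : c ⟨1, by omega⟩ ⊆ c i := chain_le hcmono (by rw [Fin.le_def]; exact hi)
    exact ⟨x, h1i (hLc hxL), hxH⟩
  have key : ∀ i, ∀ h : i < d + 1, Γ.HasChain (c ⟨i, h⟩ ∩ H) i ∨
      (∃ x ∈ c ⟨i, h⟩, x ∉ H ∧ (c ⟨i, h⟩ ∩ H = ∅ ∨ Γ.HasChain (c ⟨i, h⟩ ∩ H) (i - 1))) := by
    intro i
    induction i with
    | zero =>
      intro h
      rcases (c ⟨0, h⟩ ∩ H).eq_empty_or_nonempty with hemp | hne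
      · obtain ⟨p, hp⟩ := (hcns ⟨0, h⟩).1
        refine Or.inr ⟨p, hp, fun hpH => ?_, Or.inl hemp⟩
        exact Set.eq_empty_iff_forall_notMem.1 hemp p ⟨hp, hpH⟩
      · refine Or.inl ⟨fun _ => c ⟨0, h⟩ ∩ H, fun _ => ⟨hne, hsing _⟩, ?_, rfl⟩
        intro a b hab
        have := a.isLt; have := b.isLt
        rw [Fin.lt_def] at hab; omega
    | succ i ih =>
      intro h
      have hii : i < d + 1 := by omega
      have hAB : c ⟨i, hii⟩ ⊂ c ⟨i + 1, h⟩ := hcmono _ _ (by simp [Fin.lt_def])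
      have hABH : c ⟨i, hii⟩ ∩ H ⊆ c ⟨i + 1, h⟩ ∩ H :=
        Set.inter_subset_inter hAB.subset subset_rfl
      by_cases hsub2 : c ⟨i + 1, h⟩ ∩ H ⊆ c ⟨i, hii⟩
      · have heq : c ⟨i + 1, h⟩ ∩ H = c ⟨i, hii⟩ ∩ H :=
          subset_antisymm (fun x hx => ⟨hsub2 hx, hx.2⟩) hABH
        obtain ⟨y, hyB, hyA⟩ := Set.exists_of_ssubset hAB
        have hyH : y ∉ H := fun hh => hyA (hsub2 ⟨hyB, hh⟩)
        rcases ih hii with hA | ⟨x, hxA, hxH, _⟩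
        · refine Or.inr ⟨y, hyB, hyH, Or.inr ?_⟩
          rw [heq]
          exact hA
        · exfalso
          have hxB : x ∈ c ⟨i + 1, h⟩ := hAB.subset hxA
          have hxy : x ≠ y := fun hh => hyA (hh ▸ hxA)
          obtain ⟨L, hL, hxL, hyL, hLB⟩ := hline ⟨i + 1, h⟩ x y hxB hyB hxy
          obtain ⟨h', hh'L, hh'H⟩ := h1 L hL (hLB.trans ((hsub _).trans hSM))
          have hmem : h' ∈ c ⟨i + 1, h⟩ ∩ H := ⟨hLB hh'L, hh'H⟩
          rw [heq] at hmem
          have hh'A : h' ∈ c ⟨i, hii⟩ := hmem.1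
          have hh'x : h' ≠ x := fun hh => hxH (hh ▸ hh'H)
          have hLA : L ⊆ c ⟨i, hii⟩ :=
            (hcns ⟨i, hii⟩).2.2 L hL ⟨h', ⟨hh'L, hh'A⟩, x, ⟨hxL, hxA⟩, hh'x⟩
          exact hyA (hLA hyL)
      · obtain ⟨h₀, hh₀B, hh₀A⟩ := Set.not_subset.1 hsub2
        have hstrict : c ⟨i, hii⟩ ∩ H ⊂ c ⟨i + 1, h⟩ ∩ H :=
          ssubset_of_subset_of_ne hABH (fun hh => hh₀A (hh ▸ hh₀B).1)
        rcases ih hii with hA | ⟨x, hxA, hxH, hrest⟩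
        · exact Or.inl (hasChain_append hA hstrict (hsing _))
        · refine Or.inr ⟨x, hAB.subset hxA, hxH, Or.inr ?_⟩
          rcases hrest with hemp | hch
          · rcases Nat.eq_zero_or_pos i with rfl | hipos
            · refine ⟨fun _ => c ⟨1, h⟩ ∩ H, fun _ => ⟨⟨h₀, hh₀B⟩, hsing _⟩, ?_, rfl⟩
              intro a b hab
              have := a.isLt; have := b.isLt
              rw [Fin.lt_def] at hab; omega
            · exfalso
              have := hne1 ⟨i, hii⟩ hipos
              rw [hemp] at this
              exact Set.not_nonempty_empty this
          · have := hasChain_append hch hstrict (hsing _)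
            exact hasChain_trunc this (by omega)
  have hcd : c ⟨d, by omega⟩ = S := by
    rw [← hclast]; rfl
  rcases key d (by omega) with hch | ⟨x, hx, hxH, hrest⟩
  · rw [hcd] at hch
    exact hasChain_trunc hch (by omega)
  · rcases hrest with hemp | hch
    · exfalso
      have := hne1 ⟨d, by omega⟩ hd
      rw [hemp] at this
      exact Set.not_nonempty_empty this
    · rw [hcd] at hch
      exact hch

end Hyp

section Main

variable {Γ : PolarSpace}

lemma cut_claim {M W Wθ I : Set Γ.Point} {k : ℕ}
    (_hW : Γ.Singular W)
    (hIk : Γ.HasChain I k)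
    (hqI : ∀ q ∈ Wθ, ∀ i ∈ I, Γ.col q i)
    (hopp : ∀ p ∈ W, ∃ q ∈ Wθ, ¬ Γ.col p q) :
    ∀ m : ℕ, ∀ K : Set Γ.Point, Γ.Singular K → K ⊆ M → I ⊆ K →
      Γ.HasChain (W ∩ K) m → Γ.HasChain K (k + m + 1) := by
  intro m
  induction m with
  | zero =>
    intro K hK hKM hIK hch
    obtain ⟨w, hwW, hwK⟩ := hasChain_nonempty hch
    obtain ⟨q, hqWθ, hnq⟩ := hopp w hwW
    have hwI : w ∉ I := fun hwI => hnq (col_symm (hqI q hqWθ w hwI))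
    have hIKs : I ⊂ K := ssubset_of_subset_of_ne hIK
      (fun h => hwI ((Set.ext_iff.1 h w).2 hwK))
    exact hasChain_append hIk hIKs hK
  | succ m ih =>
    intro K hK hKM hIK hch
    obtain ⟨w, hwW, hwK⟩ := hasChain_nonempty hch
    obtain ⟨q, hqWθ, hnq⟩ := hopp w hwW
    have h1 : ∀ L ∈ Γ.Line, L ⊆ M → ∃ x ∈ L, x ∈ {x | x ∈ M ∧ Γ.col q x} := by
      intro L hL hLM
      rcases Γ.one_or_all q L hL with ⟨u, ⟨huL, hqu⟩, _⟩ | hall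
      · exact ⟨u, huL, hLM huL, hqu⟩
      · obtain ⟨p, hp, _⟩ := Γ.thick L hL
        exact ⟨p, hp, hLM hp, hall p hp⟩
    have h2 : ∀ L ∈ Γ.Line, L ⊆ M → ∀ a ∈ L, a ∈ {x | x ∈ M ∧ Γ.col q x} →
        ∀ b ∈ L, b ∈ {x | x ∈ M ∧ Γ.col q x} → a ≠ b →
        L ⊆ {x | x ∈ M ∧ Γ.col q x} := by
      intro L hL hLM a haL haH b hbL hbH hab x hx
      exact ⟨hLM hx, col2all hL haL hbL hab haH.2 hbH.2 x hx⟩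
    have hK' : Γ.Singular (K ∩ {x | x ∈ M ∧ Γ.col q x}) := by
      constructor
      · intro p hp q' hq'
        exact hK.1 p hp.1 q' hq'.1
      · rintro L hL ⟨p, ⟨hpL, hpK, hpH⟩, q', ⟨hq'L, hq'K, hq'H⟩, hpq⟩
        have hLK : L ⊆ K := hK.2 L hL ⟨p, ⟨hpL, hpK⟩, q', ⟨hq'L, hq'K⟩, hpq⟩
        have hLH := h2 L hL (hLK.trans hKM) p hpL hpH q' hq'L hq'H hpq
        exact fun x hx => ⟨hLK hx, hLH hx⟩
    have hIK' : I ⊆ K ∩ {x | x ∈ M ∧ Γ.col q x} :=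
      fun i hi => ⟨hIK hi, hKM (hIK hi), hqI q hqWθ i hi⟩
    have hWK' : Γ.HasChain (W ∩ (K ∩ {x | x ∈ M ∧ Γ.col q x})) m := by
      have hcut := hyperplane_cut (M := M) (S := W ∩ K)
        (Set.inter_subset_right.trans hKM) h1 h2 (by omega) hch
      rw [Set.inter_assoc] at hcut
      exact hcut
    have hres := ih (K ∩ {x | x ∈ M ∧ Γ.col q x}) hK'
      (Set.inter_subset_left.trans hKM) hIK' hWK'
    have hwH : w ∉ {x | x ∈ M ∧ Γ.col q x} := fun hh => hnq (col_symm hh.2)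
    have hstrict : K ∩ {x | x ∈ M ∧ Γ.col q x} ⊂ K :=
      ssubset_of_subset_of_ne Set.inter_subset_left
        (fun h => hwH ((Set.ext_iff.1 h w).2 hwK).2)
    exact hasChain_append hres hstrict hK

end Main

/-- Let `Γ` be a hyperbolic polar space of rank `n ≥ 2` (maximal singular
subspaces have projective dimension `n-1`, and every singular subspace of dimension
`n-2` lies in exactly two maximal ones) and `θ` a collineation such that for some
`k` with `1 ≤ k ≤ n-1` the intersection `M ∩ M^θ` has projective dimension exactly
`k` for every maximal singular subspace `M`.  Then `θ` is `ℓ`-domestic for every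
`ℓ ≥ n-k-1`: no singular subspace of projective dimension `ℓ` is mapped to an
opposite one. -/
theorem stmt_8 (Γ : PolarSpace) (n : ℕ) (hn : 2 ≤ n)
    (hmax : ∀ M : Set Γ.Point, Γ.MaxSingular M → Γ.ProjDim M (n - 1))
    (hhyperbolic : ∀ S : Set Γ.Point, Γ.Singular S → Γ.ProjDim S (n - 2) →
      ∃ M₁ M₂ : Set Γ.Point, M₁ ≠ M₂ ∧ Γ.MaxSingular M₁ ∧ Γ.MaxSingular M₂ ∧
        S ⊆ M₁ ∧ S ⊆ M₂ ∧ ∀ M, Γ.MaxSingular M → S ⊆ M → M = M₁ ∨ M = M₂)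
    (θ : Γ.Collineation) (k : ℕ) (hk0 : 1 ≤ k) (hk : k ≤ n - 1)
    (hint : ∀ M : Set Γ.Point, Γ.MaxSingular M →
      Γ.ProjDim (M ∩ (θ.toFun '' M)) k) :
    ∀ ℓ : ℕ, n - k - 1 ≤ ℓ →
      ∀ W : Set Γ.Point, Γ.Singular W → Γ.ProjDim W ℓ →
        ¬ Γ.Opp W (θ.toFun '' W) := by
  intro ℓ hℓ W hWsing hWdim hOpp
  have hWne : W.Nonempty := hasChain_nonempty hWdim.1
  obtain ⟨M, hMmax, hWM⟩ := exists_maxSingular hWsing hWne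
  have hMdim := hmax M hMmax
  have hIdim := hint M hMmax
  have hnot : ¬ Γ.HasChain M n := by
    have h2 := hMdim.2
    have hn1 : n - 1 + 1 = n := by omega
    rwa [hn1] at h2
  have hqI : ∀ q ∈ θ.toFun '' W, ∀ i ∈ M ∩ (θ.toFun '' M), Γ.col q i := by
    rintro q ⟨p, hpW, rfl⟩ i ⟨_, m', hm'M, rfl⟩
    exact map_col θ (hMmax.2.1.1 p (hWM hpW) m' hm'M)
  have hopp : ∀ p ∈ W, ∃ q ∈ θ.toFun '' W, ¬ Γ.col p q := by
    intro p hp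
    have h := hOpp.1 p hp
    push_neg at h
    exact h
  have hKch : Γ.HasChain (W ∩ M) ℓ := by
    rw [Set.inter_eq_left.2 hWM]
    exact hWdim.1
  have hfin := cut_claim (M := M) hWsing hIdim.1 hqI hopp ℓ M hMmax.2.1
    subset_rfl Set.inter_subset_left hKch
  exact hnot (hasChain_trunc hfin (by omega))
end

section
/- Let θ be a nontrivial collineation of PG(n,K), n ≥ 3, over a skew field K, such that for every hyperplane H with H ≠ H^θ every point of H ∩ H^θ is fixed by θ, and for every point p with p ≠ p^θ every hyperplane containing both p and p^θ is stabilised by θ. Then θ is a central collineation: it fixes a hyperplane pointwise and fixes all hyperplanes through some point. -/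
section Infra
open Module Submodule

variable {n : ℕ} {K : Type} [DivisionRing K]

private lemma finrank_V : Module.finrank K (Fin (n + 1) → K) = n + 1 := by
  rw [Module.finrank_pi]; simp

private lemma hyp_ext {H H' : PGHyp n K} (h : H.1 = H'.1) : H = H' := Subtype.ext h

private lemma hyp_ne_top (H : PGHyp n K) : H.1 ≠ ⊤ := by
  intro h
  have := H.2
  rw [h, finrank_top, finrank_V] at this
  omega

private lemma exists_not_mem {W : Submodule K (Fin (n + 1) → K)} (h : W ≠ ⊤) :
    ∃ v, v ∉ W := by
  by_contra hc
  push_neg at hc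
  exact h (Submodule.eq_top_iff'.2 hc)

private lemma finrank_le' (W : Submodule K (Fin (n + 1) → K)) :
    Module.finrank K W ≤ n + 1 := by
  simpa [finrank_V] using Submodule.finrank_le W

private lemma eq_top_of_finrank {W : Submodule K (Fin (n + 1) → K)}
    (h : n + 1 ≤ Module.finrank K W) : W = ⊤ := by
  apply Submodule.eq_top_of_finrank_eq
  rw [finrank_V]
  exact le_antisymm (finrank_le' W) h

private lemma ne_top_finrank {W : Submodule K (Fin (n + 1) → K)} (h : W ≠ ⊤) :
    Module.finrank K W ≤ n := by
  by_contra hc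
  exact h (eq_top_of_finrank (by omega))

private lemma finrank_sup_inf (W W' : Submodule K (Fin (n + 1) → K)) :
    Module.finrank K ↥(W ⊔ W') + Module.finrank K ↥(W ⊓ W')
      = Module.finrank K W + Module.finrank K W' :=
  Submodule.finrank_sup_add_finrank_inf_eq W W'

private lemma eq_of_le_finrank {W W' : Submodule K (Fin (n + 1) → K)} (h : W ≤ W')
    (hr : Module.finrank K W' ≤ Module.finrank K W) : W = W' :=
  Submodule.eq_of_le_of_finrank_le h hr

private lemma finrank_lt_of_lt {W W' : Submodule K (Fin (n + 1) → K)} (h : W < W') :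
    Module.finrank K W < Module.finrank K W' :=
  Submodule.finrank_lt_finrank_of_lt h

private lemma mem_sup_span {W : Submodule K (Fin (n + 1) → K)} {v u : Fin (n + 1) → K}
    (h : u ∈ W ⊔ (K ∙ v)) : ∃ m ∈ W, ∃ a : K, u = m + a • v := by
  obtain ⟨m, hm, x, hx, rfl⟩ := Submodule.mem_sup.1 h
  obtain ⟨a, rfl⟩ := Submodule.mem_span_singleton.1 hx
  exact ⟨m, hm, a, rfl⟩

/-- absorption: if `u ∈ W ⊔ ⟨v⟩` but `u ∉ W` then `v ∈ W ⊔ ⟨u⟩`. -/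
private lemma absorb {W : Submodule K (Fin (n + 1) → K)} {v u : Fin (n + 1) → K}
    (h : u ∈ W ⊔ (K ∙ v)) (hu : u ∉ W) : v ∈ W ⊔ (K ∙ u) := by
  obtain ⟨m, hm, a, heq⟩ := mem_sup_span h
  have ha : a ≠ 0 := by rintro rfl; simp at heq; exact hu (heq ▸ hm)
  have hv : v = a⁻¹ • u - a⁻¹ • m := by
    rw [heq, smul_add, smul_smul, inv_mul_cancel₀ ha, one_smul]; abel
  rw [hv]
  exact sub_mem (Submodule.mem_sup_right (Submodule.mem_span_singleton.2 ⟨a⁻¹, rfl⟩))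
    (Submodule.mem_sup_left (W.smul_mem _ hm))

private lemma inf_span_eq_bot {W : Submodule K (Fin (n + 1) → K)} {v : Fin (n + 1) → K}
    (h : v ∉ W) : W ⊓ (K ∙ v) = ⊥ := by
  rw [eq_bot_iff]
  rintro u ⟨hu, hus⟩
  obtain ⟨a, rfl⟩ := Submodule.mem_span_singleton.1 hus
  rcases eq_or_ne a 0 with rfl | ha
  · simp
  · exact absurd (by simpa [smul_smul, inv_mul_cancel₀ ha] using W.smul_mem a⁻¹ hu) h

private lemma finrank_sup_span {W : Submodule K (Fin (n + 1) → K)} {v : Fin (n + 1) → K}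
    (hv : v ≠ 0) (h : v ∉ W) :
    Module.finrank K ↥(W ⊔ (K ∙ v)) = Module.finrank K W + 1 := by
  have h1 := finrank_sup_inf W (K ∙ v)
  rw [inf_span_eq_bot h, finrank_bot, finrank_span_singleton hv] at h1
  omega

end Infra
section Avoid
open Module Submodule

variable {n : ℕ} {K : Type} [DivisionRing K]

private lemma ne_top_of_not_mem {W : Submodule K (Fin (n + 1) → K)} {w : Fin (n + 1) → K}
    (h : w ∉ W) : W ≠ ⊤ := fun ht => h (by simp [ht])

private lemma finrank_sup_span_le (X : Submodule K (Fin (n + 1) → K)) {v : Fin (n + 1) → K}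
    (hv : v ≠ 0) : Module.finrank K ↥(X ⊔ (K ∙ v)) ≤ Module.finrank K X + 1 := by
  have := Submodule.finrank_add_le_finrank_add_finrank X (K ∙ v)
  rwa [finrank_span_singleton hv] at this

private lemma avoid_trick_one {W : Submodule K (Fin (n + 1) → K)} {w₁ w₂ : Fin (n + 1) → K}
    (h1 : w₁ ∉ W) (hc : w₂ ∉ W ⊔ (K ∙ w₁)) (hr : Module.finrank K W + 1 = n) :
    ∃ H : PGHyp n K, W ≤ H.1 ∧ w₁ ∉ H.1 ∧ w₂ ∉ H.1 := by
  have h2 : w₂ ∉ W := fun h => hc (Submodule.mem_sup_left h)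
  have hvW : w₁ + w₂ ∉ W := fun h => hc (by
    have : w₂ = (w₁ + w₂) - w₁ := by abel
    rw [this]
    exact sub_mem (Submodule.mem_sup_left h)
      (Submodule.mem_sup_right (Submodule.mem_span_singleton_self _)))
  have hv0 : w₁ + w₂ ≠ 0 := fun h => hvW (h ▸ W.zero_mem)
  refine ⟨⟨W ⊔ (K ∙ (w₁ + w₂)), by rw [finrank_sup_span hv0 hvW]; omega⟩, le_sup_left, ?_, ?_⟩
  · intro hmem
    have hv1 : w₁ + w₂ ∈ W ⊔ (K ∙ w₁) := absorb hmem h1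
    exact hc (by
      have : w₂ = (w₁ + w₂) - w₁ := by abel
      rw [this]
      exact sub_mem hv1 (Submodule.mem_sup_right (Submodule.mem_span_singleton_self _)))
  · intro hmem
    have hv2 : w₁ + w₂ ∈ W ⊔ (K ∙ w₂) := absorb hmem h2
    have hw1 : w₁ ∈ W ⊔ (K ∙ w₂) := by
      have : w₁ = (w₁ + w₂) - w₂ := by abel
      rw [this]
      exact sub_mem hv2 (Submodule.mem_sup_right (Submodule.mem_span_singleton_self _))
    exact hc (absorb hw1 h1)

private lemma avoid_trick {W : Submodule K (Fin (n + 1) → K)} {w₁ w₂ : Fin (n + 1) → K}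
    (h1 : w₁ ∉ W) (h2 : w₂ ∉ W) (hr : Module.finrank K W + 1 = n) :
    ∃ H : PGHyp n K, W ≤ H.1 ∧ w₁ ∉ H.1 ∧ w₂ ∉ H.1 := by
  have hw1 : w₁ ≠ 0 := fun h => h1 (h ▸ W.zero_mem)
  by_cases c1 : w₂ ∈ W ⊔ (K ∙ w₁)
  · by_cases c2 : w₁ ∈ W ⊔ (K ∙ w₂)
    · have hne : W ⊔ (K ∙ w₁) ≠ ⊤ := by
        intro h
        have h' := finrank_sup_span hw1 h1
        rw [h, finrank_top, finrank_V] at h'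
        omega
      obtain ⟨v, hv⟩ := exists_not_mem hne
      have hvW : v ∉ W := fun h => hv (Submodule.mem_sup_left h)
      have hv0 : v ≠ 0 := fun h => hvW (h ▸ W.zero_mem)
      refine ⟨⟨W ⊔ (K ∙ v), by rw [finrank_sup_span hv0 hvW]; omega⟩, le_sup_left, ?_, ?_⟩
      · exact fun hmem => hv (absorb hmem h1)
      · intro hmem
        have hv2 : v ∈ W ⊔ (K ∙ w₂) := absorb hmem h2
        have hle : W ⊔ (K ∙ w₂) ≤ W ⊔ (K ∙ w₁) :=
          sup_le le_sup_left ((Submodule.span_singleton_le_iff_mem _ _).2 c1)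
        exact hv (hle hv2)
    · obtain ⟨H, hH, hH2, hH1⟩ := avoid_trick_one h2 c2 hr
      exact ⟨H, hH, hH1, hH2⟩
  · exact avoid_trick_one h1 c1 hr

private lemma avoid_aux (d : ℕ) : ∀ (W : Submodule K (Fin (n + 1) → K)) (w₁ w₂ : Fin (n + 1) → K),
    w₁ ∉ W → w₂ ∉ W → n ≤ Module.finrank K W + d →
    ∃ H : PGHyp n K, W ≤ H.1 ∧ w₁ ∉ H.1 ∧ w₂ ∉ H.1 := by
  induction d with
  | zero =>
    intro W w₁ w₂ h1 h2 hd
    have hle := ne_top_finrank (ne_top_of_not_mem h1)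
    exact ⟨⟨W, by omega⟩, le_rfl, h1, h2⟩
  | succ d ih =>
    intro W w₁ w₂ h1 h2 hd
    have hle := ne_top_finrank (ne_top_of_not_mem h1)
    rcases Nat.lt_or_ge (Module.finrank K W + 1) n with hlt | hge
    · have hw1 : w₁ ≠ 0 := fun h => h1 (h ▸ W.zero_mem)
      have hw2 : w₂ ≠ 0 := fun h => h2 (h ▸ W.zero_mem)
      have hBne : W ⊔ (K ∙ w₁) ⊔ (K ∙ w₂) ≠ ⊤ := by
        intro h
        have hb1 := finrank_sup_span_le (W ⊔ (K ∙ w₁)) hw2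
        have hb2 := finrank_sup_span_le W hw1
        rw [h, finrank_top, finrank_V] at hb1
        omega
      obtain ⟨v, hv⟩ := exists_not_mem hBne
      have hvW : v ∉ W := fun h => hv (Submodule.mem_sup_left (Submodule.mem_sup_left h))
      have h1' : w₁ ∉ W ⊔ (K ∙ v) := fun h =>
        hv (Submodule.mem_sup_left (absorb h h1))
      have h2' : w₂ ∉ W ⊔ (K ∙ v) := fun h => by
        have := absorb h h2
        have hle2 : W ⊔ (K ∙ w₂) ≤ W ⊔ (K ∙ w₁) ⊔ (K ∙ w₂) :=
          sup_le (le_trans le_sup_left le_sup_left) le_sup_right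
        exact hv (hle2 this)
      have hv0 : v ≠ 0 := fun h => hvW (h ▸ W.zero_mem)
      obtain ⟨H, hH, hH1, hH2⟩ := ih (W ⊔ (K ∙ v)) w₁ w₂ h1' h2'
        (by rw [finrank_sup_span hv0 hvW]; omega)
      exact ⟨H, le_trans le_sup_left hH, hH1, hH2⟩
    · rcases Nat.lt_or_ge (Module.finrank K W) n with hlt2 | hge2
      · exact avoid_trick h1 h2 (by omega)
      · exact ⟨⟨W, by omega⟩, le_rfl, h1, h2⟩

/-- Main avoidance lemma: a hyperplane through `W` avoiding two given vectors. -/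
private lemma exists_hyp_avoid2 {W : Submodule K (Fin (n + 1) → K)} {w₁ w₂ : Fin (n + 1) → K}
    (h1 : w₁ ∉ W) (h2 : w₂ ∉ W) :
    ∃ H : PGHyp n K, W ≤ H.1 ∧ w₁ ∉ H.1 ∧ w₂ ∉ H.1 :=
  avoid_aux n W w₁ w₂ h1 h2 (by omega)

private lemma exists_hyp_avoid {W : Submodule K (Fin (n + 1) → K)} {w : Fin (n + 1) → K}
    (h : w ∉ W) : ∃ H : PGHyp n K, W ≤ H.1 ∧ w ∉ H.1 := by
  obtain ⟨H, hH, h1, _⟩ := exists_hyp_avoid2 h h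
  exact ⟨H, hH, h1⟩

end Avoid
section Geom
open Module Submodule Projectivization

variable {n : ℕ} {K : Type} [DivisionRing K]

private lemma pt_submodule_le_iff {p q : PGPoint n K} : p.submodule ≤ q.submodule ↔ p = q := by
  constructor
  · intro h
    exact Projectivization.submodule_injective
      (eq_of_le_finrank h (by rw [finrank_submodule, finrank_submodule]))
  · rintro rfl; exact le_rfl

private lemma pt_submodule_ne {p q : PGPoint n K} (h : p ≠ q) : p.submodule ≠ q.submodule :=
  fun he => h (Projectivization.submodule_injective he)

private lemma incid_mk {v : Fin (n + 1) → K} (hv : v ≠ 0) {H : PGHyp n K} :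
    PGIncid (Projectivization.mk K v hv) H ↔ v ∈ H.1 := by
  unfold PGIncid
  rw [Projectivization.submodule_mk, Submodule.span_singleton_le_iff_mem]

private lemma mk_eq_of_mem {v : Fin (n + 1) → K} (hv : v ≠ 0) {p : PGPoint n K}
    (h : v ∈ p.submodule) : Projectivization.mk K v hv = p := by
  apply pt_submodule_le_iff.1
  rw [Projectivization.submodule_mk]
  exact (Submodule.span_singleton_le_iff_mem _ _).2 h

private lemma incid_iff_rep_mem {p : PGPoint n K} {H : PGHyp n K} :
    PGIncid p H ↔ p.rep ∈ H.1 := by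
  unfold PGIncid
  rw [Projectivization.submodule_eq, Submodule.span_singleton_le_iff_mem]

private lemma rep_mem_submodule (p : PGPoint n K) : p.rep ∈ p.submodule := by
  rw [Projectivization.submodule_eq]
  exact Submodule.mem_span_singleton_self _

/-- general fact about two distinct hyperplanes -/
private lemma hyp_inf {H H' : PGHyp n K} (hne : H.1 ≠ H'.1) :
    Module.finrank K ↥(H.1 ⊓ H'.1) + 1 = n := by
  have hlt : H.1 < H.1 ⊔ H'.1 := by
    refine lt_of_le_of_ne le_sup_left (fun he => hne ?_)
    have h' : H'.1 ≤ H.1 := le_trans le_sup_right he.ge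
    exact (eq_of_le_finrank h' (by rw [H.2, H'.2])).symm
  have h1 : n + 1 ≤ Module.finrank K ↥(H.1 ⊔ H'.1) := by
    have := finrank_lt_of_lt hlt
    rw [H.2] at this
    omega
  have h2 := finrank_le' (H.1 ⊔ H'.1)
  have h3 := finrank_sup_inf H.1 H'.1
  rw [H.2, H'.2] at h3
  omega

variable {θ : PGCollineation n K}

/-- The line joining a (moving) point to its image. -/
private def Lline (θ : PGCollineation n K) (p : PGPoint n K) : Submodule K (Fin (n + 1) → K) :=
  p.submodule ⊔ (θ.ptMap p).submodule

/-- The intersection of a hyperplane with its image. -/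
private def Msub (θ : PGCollineation n K) (H : PGHyp n K) : Submodule K (Fin (n + 1) → K) :=
  H.1 ⊓ (θ.hypMap H).1

private lemma pt_le_Lline (p : PGPoint n K) : p.submodule ≤ Lline θ p := le_sup_left

private lemma ptMap_le_Lline (p : PGPoint n K) : (θ.ptMap p).submodule ≤ Lline θ p := le_sup_right

private lemma finrank_Lline {p : PGPoint n K} (hp : θ.ptMap p ≠ p) :
    Module.finrank K ↥(Lline θ p) = 2 := by
  have hne : (θ.ptMap p).submodule ≠ p.submodule := pt_submodule_ne hp
  have hnm : (θ.ptMap p).rep ∉ p.submodule := by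
    intro h
    have h1 : Projectivization.mk K (θ.ptMap p).rep (Projectivization.rep_nonzero _) = p :=
      mk_eq_of_mem _ h
    rw [Projectivization.mk_rep] at h1
    exact hp h1
  have : Lline θ p = p.submodule ⊔ (K ∙ (θ.ptMap p).rep) := by
    unfold Lline
    rw [Projectivization.submodule_eq (θ.ptMap p)]
  rw [this, finrank_sup_span (Projectivization.rep_nonzero _) hnm, finrank_submodule]

private lemma pt_fix_transfer {x : PGPoint n K} {H : PGHyp n K} (hx : θ.ptMap x = x)
    (h : PGIncid x H) : PGIncid x (θ.hypMap H) := by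
  have := (θ.incid_iff x H).1 h
  rwa [hx] at this

private lemma hyp_stab_transfer {p : PGPoint n K} {H : PGHyp n K} (hH : θ.hypMap H = H)
    (h : PGIncid p H) : PGIncid (θ.ptMap p) H := by
  have := (θ.incid_iff p H).1 h
  rwa [hH] at this

private lemma moving_hyp_of {p : PGPoint n K} {H : PGHyp n K} (h : PGIncid p H)
    (h2 : ¬ PGIncid (θ.ptMap p) H) : θ.hypMap H ≠ H :=
  fun hH => h2 (hyp_stab_transfer hH h)

private lemma moving_ptMap {p : PGPoint n K} (hp : θ.ptMap p ≠ p) :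
    θ.ptMap (θ.ptMap p) ≠ θ.ptMap p := fun h => hp (θ.ptMap.injective h)

private lemma moving_hypMap {H : PGHyp n K} (hH : θ.hypMap H ≠ H) :
    θ.hypMap (θ.hypMap H) ≠ θ.hypMap H := fun h => hH (θ.hypMap.injective h)

end Geom
section Geom2
open Module Submodule Projectivization

variable {n : ℕ} {K : Type} [DivisionRing K] {θ : PGCollineation n K}

private lemma rep_ptMap_not_mem {p : PGPoint n K} (hp : θ.ptMap p ≠ p) :
    (θ.ptMap p).rep ∉ p.submodule := by
  intro h
  have h1 : Projectivization.mk K (θ.ptMap p).rep (Projectivization.rep_nonzero _) = p :=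
    mk_eq_of_mem _ h
  rw [Projectivization.mk_rep] at h1
  exact hp h1

private lemma stab_of_Lline_le
    (hstabhyps : ∀ p : PGPoint n K, θ.ptMap p ≠ p →
      ∀ H : PGHyp n K, PGIncid p H → PGIncid (θ.ptMap p) H → θ.hypMap H = H)
    {p : PGPoint n K} (hp : θ.ptMap p ≠ p) {H : PGHyp n K} (h : Lline θ p ≤ H.1) :
    θ.hypMap H = H :=
  hstabhyps p hp H (le_trans (pt_le_Lline p) h) (le_trans (ptMap_le_Lline p) h)

private lemma ptMap_mem_join
    (hstabhyps : ∀ p : PGPoint n K, θ.ptMap p ≠ p →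
      ∀ H : PGHyp n K, PGIncid p H → PGIncid (θ.ptMap p) H → θ.hypMap H = H)
    {p q : PGPoint n K} (hp : θ.ptMap p ≠ p) (hq : θ.ptMap q ≠ q) :
    (θ.ptMap q).submodule ≤ Lline θ p ⊔ q.submodule := by
  by_contra hc
  have hrep : (θ.ptMap q).rep ∉ Lline θ p ⊔ q.submodule := by
    intro h
    apply hc
    rw [Projectivization.submodule_eq]
    exact (Submodule.span_singleton_le_iff_mem _ _).2 h
  obtain ⟨H, hH, hrep'⟩ := exists_hyp_avoid hrep
  have hstabH := stab_of_Lline_le hstabhyps hp (le_trans le_sup_left hH)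
  have hqH : PGIncid q H := le_trans (le_trans le_sup_right hH : q.submodule ≤ H.1) le_rfl
  exact hrep' (incid_iff_rep_mem.1 (hyp_stab_transfer hstabH hqH))

private lemma Msub_fixed
    (hfixpts : ∀ H : PGHyp n K, θ.hypMap H ≠ H →
      ∀ p : PGPoint n K, PGIncid p H → PGIncid p (θ.hypMap H) → θ.ptMap p = p)
    {H : PGHyp n K} (hH : θ.hypMap H ≠ H) {v : Fin (n + 1) → K} (h : v ∈ Msub θ H)
    (h0 : v ≠ 0) : θ.ptMap (Projectivization.mk K v h0) = Projectivization.mk K v h0 :=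
  hfixpts H hH _ ((incid_mk h0).2 h.1) ((incid_mk h0).2 h.2)

private lemma Msub_inf_le
    (hfixpts : ∀ H : PGHyp n K, θ.hypMap H ≠ H →
      ∀ p : PGPoint n K, PGIncid p H → PGIncid p (θ.hypMap H) → θ.ptMap p = p)
    {H : PGHyp n K} (hH : θ.hypMap H ≠ H) (H' : PGHyp n K) :
    Msub θ H ⊓ H'.1 ≤ (θ.hypMap H').1 := by
  intro v hv
  rcases eq_or_ne v 0 with rfl | h0
  · exact Submodule.zero_mem _
  · have hfixv := Msub_fixed hfixpts hH hv.1 h0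
    exact (incid_mk h0).1 (pt_fix_transfer hfixv ((incid_mk h0).2 hv.2))

private lemma hyp_ne_val {H : PGHyp n K} (hH : θ.hypMap H ≠ H) : H.1 ≠ (θ.hypMap H).1 :=
  fun he => hH (hyp_ext he.symm)

private lemma finrank_Msub {H : PGHyp n K} (hH : θ.hypMap H ≠ H) :
    Module.finrank K ↥(Msub θ H) + 1 = n :=
  hyp_inf (hyp_ne_val hH)

private lemma all_stab_of_all_fixed (h : ∀ p : PGPoint n K, θ.ptMap p = p) :
    ∀ H : PGHyp n K, θ.hypMap H = H := by
  intro H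
  have hle : H.1 ≤ (θ.hypMap H).1 := by
    intro v hv
    rcases eq_or_ne v 0 with rfl | h0
    · exact Submodule.zero_mem _
    · exact (incid_mk h0).1 (pt_fix_transfer (h _) ((incid_mk h0).2 hv))
  exact (hyp_ext (eq_of_le_finrank hle (by rw [H.2, (θ.hypMap H).2]))).symm

private lemma exists_moving_pt
    (hnontriv : (∃ p : PGPoint n K, θ.ptMap p ≠ p) ∨ (∃ H : PGHyp n K, θ.hypMap H ≠ H)) :
    ∃ p : PGPoint n K, θ.ptMap p ≠ p := by
  by_contra hc
  push_neg at hc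
  have hall := all_stab_of_all_fixed hc
  rcases hnontriv with ⟨p, hp⟩ | ⟨H, hH⟩
  · exact hp (hc p)
  · exact hH (hall H)

private lemma exists_moving_hyp
    (hnontriv : (∃ p : PGPoint n K, θ.ptMap p ≠ p) ∨ (∃ H : PGHyp n K, θ.hypMap H ≠ H)) :
    ∃ H : PGHyp n K, θ.hypMap H ≠ H := by
  by_contra hc
  push_neg at hc
  have hallp : ∀ p : PGPoint n K, θ.ptMap p = p := by
    intro p
    by_contra hp
    obtain ⟨H, hH, hrep'⟩ := exists_hyp_avoid (rep_ptMap_not_mem hp)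
    have hpH : PGIncid p H := hH
    exact hrep' (incid_iff_rep_mem.1 (hyp_stab_transfer (hc H) hpH))
  rcases hnontriv with ⟨p, hp⟩ | ⟨H, hH⟩
  · exact hp (hallp p)
  · exact hH (hc H)

/-- If all moving points lie in `W` and `H` is a hyperplane not inside `W`,
then `H` is stabilised. -/
private lemma stab_of_moving_in (W : Submodule K (Fin (n + 1) → K))
    (hW : ∀ p : PGPoint n K, θ.ptMap p ≠ p → p.submodule ≤ W)
    {H : PGHyp n K} (hH : ¬ H.1 ≤ W) : θ.hypMap H = H := by
  obtain ⟨u, huH, huW⟩ := SetLike.not_le_iff_exists.1 hH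
  have key : ∀ v, v ∈ H.1 → v ∉ W → v ∈ (θ.hypMap H).1 := by
    intro v hv hvW
    have h0 : v ≠ 0 := fun h => hvW (h ▸ W.zero_mem)
    have hfix : θ.ptMap (Projectivization.mk K v h0) = Projectivization.mk K v h0 := by
      by_contra hmov
      have := hW _ hmov
      rw [Projectivization.submodule_mk] at this
      exact hvW (this (Submodule.mem_span_singleton_self _))
    exact (incid_mk h0).1 (pt_fix_transfer hfix ((incid_mk h0).2 hv))
  have hle : H.1 ≤ (θ.hypMap H).1 := by
    intro v hv
    by_cases hvW : v ∈ W
    · have h1 : v + u ∈ (θ.hypMap H).1 :=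
        key _ (Submodule.add_mem _ hv huH) (fun h => huW (by simpa using Submodule.sub_mem W h hvW))
      have h2 : u ∈ (θ.hypMap H).1 := key _ huH huW
      simpa using Submodule.sub_mem _ h1 h2
    · exact key _ hv hvW
  exact (hyp_ext (eq_of_le_finrank hle (by rw [H.2, (θ.hypMap H).2]))).symm

end Geom2
section Center
open Module Submodule Projectivization

variable {n : ℕ} {K : Type} [DivisionRing K] {θ : PGCollineation n K}

private lemma rank1_eq {W W' : Submodule K (Fin (n + 1) → K)} (h : W ≤ W')
    (h1 : Module.finrank K W = 1) (h2 : Module.finrank K W' ≤ 1) : W = W' :=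
  eq_of_le_finrank h (by omega)

private lemma finrank_sup_rank1 {Y Z : Submodule K (Fin (n + 1) → K)} (hne : Y ≠ Z)
    (h1 : Module.finrank K Y = 1) (h2 : Module.finrank K Z = 1) :
    Module.finrank K ↥(Y ⊔ Z) = 2 := by
  have hinf : Y ⊓ Z < Y := by
    refine lt_of_le_of_ne inf_le_left (fun he => hne ?_)
    exact rank1_eq (he ▸ inf_le_right) h1 h2.le
  have h0 := finrank_lt_of_lt hinf
  have h3 := finrank_sup_inf Y Z
  omega

private lemma Lline_le_join
    (hstabhyps : ∀ p : PGPoint n K, θ.ptMap p ≠ p →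
      ∀ H : PGHyp n K, PGIncid p H → PGIncid (θ.ptMap p) H → θ.hypMap H = H)
    {p q : PGPoint n K} (hp : θ.ptMap p ≠ p) (hq : θ.ptMap q ≠ q) :
    Lline θ q ≤ Lline θ p ⊔ q.submodule :=
  sup_le le_sup_right (ptMap_mem_join hstabhyps hp hq)

private lemma finrank_line_join_le
    (hstabhyps : ∀ p : PGPoint n K, θ.ptMap p ≠ p →
      ∀ H : PGHyp n K, PGIncid p H → PGIncid (θ.ptMap p) H → θ.hypMap H = H)
    {p q : PGPoint n K} (hp : θ.ptMap p ≠ p) (hq : θ.ptMap q ≠ q) :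
    Module.finrank K ↥(Lline θ p ⊔ Lline θ q) ≤ 3 := by
  have h1 : Lline θ p ⊔ Lline θ q ≤ Lline θ p ⊔ q.submodule :=
    sup_le le_sup_left (Lline_le_join hstabhyps hp hq)
  have h2 : Lline θ p ⊔ q.submodule = Lline θ p ⊔ (K ∙ q.rep) := by
    rw [Projectivization.submodule_eq]
  have h3 := finrank_sup_span_le (Lline θ p) (Projectivization.rep_nonzero q)
  rw [finrank_Lline hp] at h3
  have := Submodule.finrank_mono h1
  rw [h2] at this
  omega

private lemma line_inf
    (hstabhyps : ∀ p : PGPoint n K, θ.ptMap p ≠ p →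
      ∀ H : PGHyp n K, PGIncid p H → PGIncid (θ.ptMap p) H → θ.hypMap H = H)
    {p q : PGPoint n K} (hp : θ.ptMap p ≠ p) (hq : θ.ptMap q ≠ q)
    (hne : Lline θ p ≠ Lline θ q) :
    Module.finrank K ↥(Lline θ p ⊓ Lline θ q) = 1 := by
  have h1 := finrank_sup_inf (Lline θ p) (Lline θ q)
  rw [finrank_Lline hp, finrank_Lline hq] at h1
  have h2 := finrank_line_join_le hstabhyps hp hq
  have h3 : Module.finrank K ↥(Lline θ p ⊓ Lline θ q) ≤ 2 := by
    have := Submodule.finrank_mono (inf_le_left : Lline θ p ⊓ Lline θ q ≤ Lline θ p)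
    rwa [finrank_Lline hp] at this
  rcases Nat.lt_or_ge (Module.finrank K ↥(Lline θ p ⊓ Lline θ q)) 2 with hlt | hge
  · omega
  · exfalso
    have he : Lline θ p ⊓ Lline θ q = Lline θ p :=
      eq_of_le_finrank inf_le_left (by rw [finrank_Lline hp]; omega)
    have : Lline θ p ≤ Lline θ q := he ▸ inf_le_right
    exact hne (eq_of_le_finrank this (by rw [finrank_Lline hp, finrank_Lline hq]))

private lemma finrank_sup_pts {p q : PGPoint n K} (h : q ≠ p) :
    Module.finrank K ↥(p.submodule ⊔ q.submodule) = 2 := by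
  have hnm : q.rep ∉ p.submodule := by
    intro hmem
    have h1 : Projectivization.mk K q.rep (Projectivization.rep_nonzero _) = p :=
      mk_eq_of_mem _ hmem
    rw [Projectivization.mk_rep] at h1
    exact h h1
  have : p.submodule ⊔ q.submodule = p.submodule ⊔ (K ∙ q.rep) := by
    rw [Projectivization.submodule_eq q]
  rw [this, finrank_sup_span (Projectivization.rep_nonzero _) hnm, finrank_submodule]

private lemma Msub_not_top {H : PGHyp n K} (hH : θ.hypMap H ≠ H) : ¬ H.1 ≤ Msub θ H := by
  intro hle
  have h1 := Submodule.finrank_mono hle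
  have h2 := finrank_Msub hH
  rw [H.2] at h1
  omega

/-- C1 : a point on all moving lines is a centre. -/
private lemma center_good
    (hn : 3 ≤ n)
    (hstabhyps : ∀ p : PGPoint n K, θ.ptMap p ≠ p →
      ∀ H : PGHyp n K, PGIncid p H → PGIncid (θ.ptMap p) H → θ.hypMap H = H)
    {c : PGPoint n K} (hc : ∀ q, θ.ptMap q ≠ q → c.submodule ≤ Lline θ q) :
    ∀ H : PGHyp n K, PGIncid c H → θ.hypMap H = H := by
  intro H hcH
  by_contra hH
  -- produce a point q ∈ H, not in Msub θ H, different from c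
  have hq : ∃ v : Fin (n + 1) → K, ∃ h0 : v ≠ 0, v ∈ H.1 ∧ v ∉ Msub θ H ∧
      Projectivization.mk K v h0 ≠ c := by
    by_cases hcM : c.submodule ≤ Msub θ H
    · obtain ⟨v, hvH, hvM⟩ := SetLike.not_le_iff_exists.1 (Msub_not_top hH)
      have h0 : v ≠ 0 := fun h => hvM (h ▸ Submodule.zero_mem _)
      refine ⟨v, h0, hvH, hvM, fun he => hvM ?_⟩
      have : v ∈ c.submodule := by
        rw [← he, Projectivization.submodule_mk]
        exact Submodule.mem_span_singleton_self _
      exact hcM this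
    · have hwH : c.rep ∈ H.1 := incid_iff_rep_mem.1 hcH
      have hwM : c.rep ∉ Msub θ H := by
        intro hmem
        apply hcM
        rw [Projectivization.submodule_eq]
        exact (Submodule.span_singleton_le_iff_mem _ _).2 hmem
      have hMne : Msub θ H ≠ ⊥ := by
        intro hb
        have := finrank_Msub hH
        rw [hb, finrank_bot] at this
        omega
      obtain ⟨m, hm, hm0⟩ := (Submodule.ne_bot_iff _).1 hMne
      have h0 : c.rep + m ≠ 0 := by
        intro h
        apply hwM
        have : c.rep = -m := by linear_combination (norm := abel) h
        rw [this]
        exact Submodule.neg_mem _ hm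
      refine ⟨c.rep + m, h0, Submodule.add_mem _ hwH hm.1, ?_, ?_⟩
      · intro hmem
        exact hwM (by simpa using Submodule.sub_mem _ hmem hm)
      · intro he
        have hmem : c.rep + m ∈ (Projectivization.mk K (c.rep + m) h0).submodule := by
          rw [Projectivization.submodule_mk]
          exact Submodule.mem_span_singleton_self _
        rw [he, Projectivization.submodule_eq] at hmem
        obtain ⟨a, ha⟩ := Submodule.mem_span_singleton.1 hmem
        have hma : m = (a - 1) • c.rep := by rw [sub_smul, one_smul, ha]; abel
        rcases eq_or_ne a 1 with rfl | hane
        · simp at hma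
          exact hm0 hma
        · apply hwM
          have : c.rep = (a - 1)⁻¹ • m := by
            rw [hma, smul_smul, inv_mul_cancel₀ (sub_ne_zero.2 hane), one_smul]
          rw [this]
          exact (Msub θ H).smul_mem _ hm
  obtain ⟨v, h0, hvH, hvM, hvc⟩ := hq
  set q := Projectivization.mk K v h0 with hqdef
  have hqH : PGIncid q H := (incid_mk h0).2 hvH
  have hqmov : θ.ptMap q ≠ q := by
    intro hfix
    apply hvM
    have := pt_fix_transfer hfix hqH
    rw [hqdef] at this
    exact ⟨hvH, (incid_mk h0).1 this⟩
  have hline : Lline θ q = c.submodule ⊔ q.submodule := by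
    refine (eq_of_le_finrank (sup_le (hc q hqmov) (pt_le_Lline q)) ?_).symm
    rw [finrank_Lline hqmov, finrank_sup_pts hvc]
  have hle : Lline θ q ≤ H.1 := by
    rw [hline]
    exact sup_le hcH hqH
  exact hH (stab_of_Lline_le hstabhyps hqmov hle)

end Center
section Concur
open Module Submodule Projectivization

variable {n : ℕ} {K : Type} [DivisionRing K] {θ : PGCollineation n K}

/-- C2 : there is a point lying on every moving line. -/
private lemma center_concurrent (hn : 3 ≤ n)
    (hstabhyps : ∀ p : PGPoint n K, θ.ptMap p ≠ p →
      ∀ H : PGHyp n K, PGIncid p H → PGIncid (θ.ptMap p) H → θ.hypMap H = H)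
    {p₀ : PGPoint n K} (hp₀ : θ.ptMap p₀ ≠ p₀) {H₀ : PGHyp n K} (hH₀ : θ.hypMap H₀ ≠ H₀) :
    ∃ c : PGPoint n K, ∀ q, θ.ptMap q ≠ q → c.submodule ≤ Lline θ q := by
  by_cases case1 : ∀ q, θ.ptMap q ≠ q → Lline θ q = Lline θ p₀
  · refine ⟨p₀, fun q hq => ?_⟩
    rw [case1 q hq]
    exact pt_le_Lline p₀
  · push_neg at case1
    obtain ⟨q₁, hq₁, hLne⟩ := case1
    have hX : Module.finrank K ↥(Lline θ p₀ ⊓ Lline θ q₁) = 1 :=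
      line_inf hstabhyps hp₀ hq₁ (Ne.symm hLne)
    set x : PGPoint n K := Projectivization.mk'' (Lline θ p₀ ⊓ Lline θ q₁) hX with hxdef
    have hxsub : x.submodule = Lline θ p₀ ⊓ Lline θ q₁ :=
      Projectivization.submodule_mk'' _ hX
    by_cases case2 : ∀ r, θ.ptMap r ≠ r → x.submodule ≤ Lline θ r
    · exact ⟨x, case2⟩
    push_neg at case2
    obtain ⟨r₁, hr₁, hxr⟩ := case2
    exfalso
    have hπ3 : Module.finrank K ↥(Lline θ p₀ ⊔ Lline θ q₁) = 3 := by
      have h := finrank_sup_inf (Lline θ p₀) (Lline θ q₁)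
      rw [finrank_Lline hp₀, finrank_Lline hq₁, hX] at h
      omega
    have hLp₀π : Lline θ p₀ ≤ Lline θ p₀ ⊔ Lline θ q₁ := le_sup_left
    have hLq₁π : Lline θ q₁ ≤ Lline θ p₀ ⊔ Lline θ q₁ := le_sup_right
    have stepA : ∀ s, θ.ptMap s ≠ s → s.submodule ≤ Lline θ p₀ ⊔ Lline θ q₁ →
        Lline θ s ≤ Lline θ p₀ ⊔ Lline θ q₁ := fun s hs hsπ =>
      sup_le hsπ (le_trans (ptMap_mem_join hstabhyps hp₀ hs) (sup_le hLp₀π hsπ))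
    have claimB : ∀ s, θ.ptMap s ≠ s → ¬ s.submodule ≤ Lline θ p₀ ⊔ Lline θ q₁ →
        x.submodule ≤ Lline θ s := by
      intro s hs hsπ
      have hne0 : Lline θ s ≠ Lline θ p₀ := by
        intro h
        exact hsπ (le_trans (pt_le_Lline s) (le_trans h.le hLp₀π))
      have hne1 : Lline θ s ≠ Lline θ q₁ := by
        intro h
        exact hsπ (le_trans (pt_le_Lline s) (le_trans h.le hLq₁π))
      have hY : Module.finrank K ↥(Lline θ s ⊓ Lline θ p₀) = 1 :=
        line_inf hstabhyps hs hp₀ hne0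
      have hZ : Module.finrank K ↥(Lline θ s ⊓ Lline θ q₁) = 1 :=
        line_inf hstabhyps hs hq₁ hne1
      by_cases hyz : Lline θ s ⊓ Lline θ p₀ = Lline θ s ⊓ Lline θ q₁
      · -- Y = Z ≤ X, so x ≤ L_s
        have hYX : Lline θ s ⊓ Lline θ p₀ ≤ x.submodule := by
          rw [hxsub]
          exact le_inf inf_le_right (hyz ▸ inf_le_right)
        have : Lline θ s ⊓ Lline θ p₀ = x.submodule :=
          rank1_eq hYX hY (by rw [Projectivization.finrank_submodule])
        exact this ▸ inf_le_left
      · exfalso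
        have hsup2 : Module.finrank K
            ↥((Lline θ s ⊓ Lline θ p₀) ⊔ (Lline θ s ⊓ Lline θ q₁)) = 2 :=
          finrank_sup_rank1 hyz hY hZ
        have hsuple : (Lline θ s ⊓ Lline θ p₀) ⊔ (Lline θ s ⊓ Lline θ q₁) ≤ Lline θ s :=
          sup_le inf_le_left inf_le_left
        have heq : (Lline θ s ⊓ Lline θ p₀) ⊔ (Lline θ s ⊓ Lline θ q₁) = Lline θ s :=
          eq_of_le_finrank hsuple (by rw [finrank_Lline hs, hsup2])
        have hLsπ : Lline θ s ≤ Lline θ p₀ ⊔ Lline θ q₁ := by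
          rw [← heq]
          exact sup_le (le_trans inf_le_right hLp₀π) (le_trans inf_le_right hLq₁π)
        exact hsπ (le_trans (pt_le_Lline s) hLsπ)
    have hr₁mem : r₁.submodule ≤ Lline θ p₀ ⊔ Lline θ q₁ := by
      by_contra h
      exact hxr (claimB r₁ hr₁ h)
    have hr₁π : Lline θ r₁ ≤ Lline θ p₀ ⊔ Lline θ q₁ := stepA r₁ hr₁ hr₁mem
    have hallπ : ∀ s, θ.ptMap s ≠ s → s.submodule ≤ Lline θ p₀ ⊔ Lline θ q₁ := by
      intro s hs
      by_contra hsπ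
      have hxs : x.submodule ≤ Lline θ s := claimB s hs hsπ
      have hne_r : Lline θ s ≠ Lline θ r₁ := fun h => hxr (h ▸ hxs)
      have hD : Module.finrank K ↥(Lline θ s ⊓ Lline θ r₁) = 1 :=
        line_inf hstabhyps hs hr₁ hne_r
      have hDπ : Lline θ s ⊓ Lline θ r₁ ≤ Lline θ p₀ ⊔ Lline θ q₁ :=
        le_trans inf_le_right hr₁π
      have hlt : (Lline θ p₀ ⊔ Lline θ q₁) ⊓ Lline θ s < Lline θ s := by
        refine lt_of_le_of_ne inf_le_right (fun he => hsπ ?_)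
        exact le_trans (pt_le_Lline s) (he ▸ inf_le_left)
      have hr2 : Module.finrank K ↥((Lline θ p₀ ⊔ Lline θ q₁) ⊓ Lline θ s) < 2 := by
        have := finrank_lt_of_lt hlt
        rwa [finrank_Lline hs] at this
      have hxle : x.submodule ≤ (Lline θ p₀ ⊔ Lline θ q₁) ⊓ Lline θ s :=
        le_inf (hxsub ▸ le_trans inf_le_left hLp₀π) hxs
      have heqx : x.submodule = (Lline θ p₀ ⊔ Lline θ q₁) ⊓ Lline θ s :=
        eq_of_le_finrank hxle (by rw [Projectivization.finrank_submodule]; omega)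
      have hDx : Lline θ s ⊓ Lline θ r₁ ≤ x.submodule := by
        rw [heqx]
        exact le_inf hDπ inf_le_left
      have hDeq : Lline θ s ⊓ Lline θ r₁ = x.submodule :=
        rank1_eq hDx hD (by rw [Projectivization.finrank_submodule])
      exact hxr (hDeq ▸ inf_le_right)
    have hkey : ∀ H : PGHyp n K, θ.hypMap H ≠ H → H.1 = Lline θ p₀ ⊔ Lline θ q₁ := by
      intro H hH
      by_contra hne
      by_cases hle : H.1 ≤ Lline θ p₀ ⊔ Lline θ q₁
      · exact hne (eq_of_le_finrank hle (by rw [H.2, hπ3]; omega))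
      · exact hH (stab_of_moving_in _ hallπ hle)
    exact hH₀ (hyp_ext ((hkey (θ.hypMap H₀) (moving_hypMap hH₀)).trans
      (hkey H₀ hH₀).symm))

end Concur
section Axis
open Module Submodule Projectivization

variable {n : ℕ} {K : Type} [DivisionRing K] {θ : PGCollineation n K}

private lemma exists_not_mem_two {W₁ W₂ : Submodule K (Fin (n + 1) → K)} (h1 : W₁ ≠ ⊤)
    (h2 : W₂ ≠ ⊤) : ∃ v, v ∉ W₁ ∧ v ∉ W₂ := by
  obtain ⟨a, ha⟩ := exists_not_mem h1
  obtain ⟨b, hb⟩ := exists_not_mem h2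
  by_cases hab : a ∈ W₂
  · by_cases hba : b ∈ W₁
    · refine ⟨a + b, fun h => ha ?_, fun h => hb ?_⟩
      · simpa using Submodule.sub_mem _ h hba
      · simpa using Submodule.sub_mem _ h hab
    · exact ⟨b, hba, hb⟩
  · exact ⟨a, ha, hab⟩

private lemma Msub_le_Msub
    (hfixpts : ∀ H : PGHyp n K, θ.hypMap H ≠ H →
      ∀ p : PGPoint n K, PGIncid p H → PGIncid p (θ.hypMap H) → θ.ptMap p = p)
    {H H' : PGHyp n K} (hH : θ.hypMap H ≠ H) :
    Msub θ H ⊓ H'.1 ≤ Msub θ H' :=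
  le_inf inf_le_right (Msub_inf_le hfixpts hH H')

private lemma Msub_sup_le
    (hfixpts : ∀ H : PGHyp n K, θ.hypMap H ≠ H →
      ∀ p : PGPoint n K, PGIncid p H → PGIncid p (θ.hypMap H) → θ.ptMap p = p)
    {H H' : PGHyp n K} (hH : θ.hypMap H ≠ H) (hH' : θ.hypMap H' ≠ H') :
    Module.finrank K ↥(Msub θ H ⊔ Msub θ H') ≤ n := by
  have h1 : Module.finrank K ↥(Msub θ H ⊓ H'.1) + 2 ≥ n := by
    have hs := finrank_sup_inf (Msub θ H) H'.1
    have hsle := finrank_le' (Msub θ H ⊔ H'.1)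
    have hfm := finrank_Msub hH
    rw [H'.2] at hs
    omega
  have h2 : Module.finrank K ↥(Msub θ H ⊓ Msub θ H') + 2 ≥ n := by
    have := Submodule.finrank_mono (Msub_le_Msub hfixpts hH (H' := H'))
    -- Msub H ⊓ H' ≤ Msub H' and ≤ Msub H, so ≤ inf
    have hle : Msub θ H ⊓ H'.1 ≤ Msub θ H ⊓ Msub θ H' :=
      le_inf inf_le_left (Msub_le_Msub hfixpts hH)
    have := Submodule.finrank_mono hle
    omega
  have hs := finrank_sup_inf (Msub θ H) (Msub θ H')
  have hfm := finrank_Msub hH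
  have hfm' := finrank_Msub hH'
  omega

private lemma join_hyp
    (hfixpts : ∀ H : PGHyp n K, θ.hypMap H ≠ H →
      ∀ p : PGPoint n K, PGIncid p H → PGIncid p (θ.hypMap H) → θ.ptMap p = p)
    {H H' : PGHyp n K} (hH : θ.hypMap H ≠ H) (hH' : θ.hypMap H' ≠ H')
    (hne : Msub θ H ≠ Msub θ H') :
    Module.finrank K ↥(Msub θ H ⊔ Msub θ H') = n := by
  have h1 := Msub_sup_le hfixpts hH hH'
  have hfm := finrank_Msub hH
  have hfm' := finrank_Msub hH'
  rcases Nat.lt_or_ge (Module.finrank K ↥(Msub θ H ⊔ Msub θ H')) n with hlt | hge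
  · exfalso
    have he : Msub θ H = Msub θ H ⊔ Msub θ H' :=
      eq_of_le_finrank le_sup_left (by omega)
    exact hne (eq_of_le_finrank (he ▸ le_sup_right) (by omega)).symm
  · omega

/-- E1 : a hyperplane containing every `Msub` of a moving hyperplane is a pointwise
fixed axis. -/
private lemma axis_good (hn : 3 ≤ n)
    (hfixpts : ∀ H : PGHyp n K, θ.hypMap H ≠ H →
      ∀ p : PGPoint n K, PGIncid p H → PGIncid p (θ.hypMap H) → θ.ptMap p = p)
    {A : PGHyp n K} (hA : ∀ H' : PGHyp n K, θ.hypMap H' ≠ H' → Msub θ H' ≤ A.1) :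
    ∀ p : PGPoint n K, PGIncid p A → θ.ptMap p = p := by
  intro p hpA
  by_contra hp
  have hLne : Lline θ p ≠ ⊤ := by
    intro h
    have := finrank_Lline hp
    rw [h, finrank_top, finrank_V] at this
    omega
  obtain ⟨u, huA, huL⟩ := exists_not_mem_two (hyp_ne_top A) hLne
  have hw : (θ.ptMap p).rep ∉ p.submodule ⊔ (K ∙ u) := by
    intro h
    have habs := absorb h (rep_ptMap_not_mem hp)
    apply huL
    have : p.submodule ⊔ (K ∙ (θ.ptMap p).rep) = Lline θ p := by
      unfold Lline
      rw [Projectivization.submodule_eq (θ.ptMap p)]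
    exact this ▸ habs
  obtain ⟨H, hHle, hHw⟩ := exists_hyp_avoid hw
  have hpH : PGIncid p H := le_trans le_sup_left hHle
  have hptH : ¬ PGIncid (θ.ptMap p) H := fun hmem => hHw (incid_iff_rep_mem.1 hmem)
  have hHmov : θ.hypMap H ≠ H := moving_hyp_of hpH hptH
  have hHA : A.1 ≠ H.1 := fun he =>
    huA (he ▸ hHle (Submodule.mem_sup_right (Submodule.mem_span_singleton_self u)))
  have h1 : Msub θ H ≤ A.1 ⊓ H.1 := le_inf (hA H hHmov) inf_le_left
  have hfr := hyp_inf hHA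
  have heq : Msub θ H = A.1 ⊓ H.1 := by
    have hfm := finrank_Msub hHmov
    exact eq_of_le_finrank h1 (by omega)
  have hpM : p.submodule ≤ Msub θ H := heq ▸ le_inf hpA hpH
  exact hp (hfixpts H hHmov p hpH (le_trans hpM inf_le_right))

end Axis
section Axis2
open Module Submodule Projectivization

variable {n : ℕ} {K : Type} [DivisionRing K] {θ : PGCollineation n K}

set_option maxHeartbeats 1600000 in
/-- E2 : there is a hyperplane containing every `Msub` of a moving hyperplane. -/
private lemma axis_concurrent (hn : 3 ≤ n)
    (hfixpts : ∀ H : PGHyp n K, θ.hypMap H ≠ H →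
      ∀ p : PGPoint n K, PGIncid p H → PGIncid p (θ.hypMap H) → θ.ptMap p = p)
    {H₀ : PGHyp n K} (hH₀ : θ.hypMap H₀ ≠ H₀) {p₀ : PGPoint n K} (hp₀ : θ.ptMap p₀ ≠ p₀)
    {c : PGPoint n K} (hcL : ∀ q, θ.ptMap q ≠ q → c.submodule ≤ Lline θ q)
    (hcH : ∀ H : PGHyp n K, PGIncid c H → θ.hypMap H = H) :
    ∃ A : PGHyp n K, ∀ H' : PGHyp n K, θ.hypMap H' ≠ H' → Msub θ H' ≤ A.1 := by
  by_cases case1 : ∀ H' : PGHyp n K, θ.hypMap H' ≠ H' → Msub θ H' = Msub θ H₀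
  · have hne : Msub θ H₀ ≠ ⊤ := by
      intro h
      have := finrank_Msub hH₀
      rw [h, finrank_top, finrank_V] at this
      omega
    obtain ⟨w, hw⟩ := exists_not_mem hne
    obtain ⟨A, hAle, -⟩ := exists_hyp_avoid hw
    exact ⟨A, fun H' hH' => (case1 H' hH') ▸ hAle⟩
  · push_neg at case1
    obtain ⟨H₁, hH₁, hMne⟩ := case1
    have hfm₀ := finrank_Msub hH₀
    have hfm₁ := finrank_Msub hH₁
    have hsupn : Module.finrank K ↥(Msub θ H₁ ⊔ Msub θ H₀) = n :=
      join_hyp hfixpts hH₁ hH₀ hMne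
    have hsupn' : Msub θ H₀ ⊔ Msub θ H₁ = Msub θ H₁ ⊔ Msub θ H₀ := sup_comm _ _
    set A₁ : PGHyp n K := ⟨Msub θ H₁ ⊔ Msub θ H₀, hsupn⟩ with hA₁def
    by_cases case2 : ∀ H' : PGHyp n K, θ.hypMap H' ≠ H' → Msub θ H' ≤ A₁.1
    · exact ⟨A₁, case2⟩
    push_neg at case2
    obtain ⟨H₂, hH₂, hM₂⟩ := case2
    exfalso
    have hfm₂ := finrank_Msub hH₂
    have hσ : Module.finrank K ↥(Msub θ H₁ ⊓ Msub θ H₀) + 2 = n := by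
      have := finrank_sup_inf (Msub θ H₁) (Msub θ H₀)
      rw [hsupn] at this
      omega
    -- step 1 : σ ≤ Msub θ H₂
    have hM₂M₀ : Msub θ H₂ ≠ Msub θ H₀ := fun h => hM₂ (h ▸ le_sup_right)
    have hM₂M₁ : Msub θ H₂ ≠ Msub θ H₁ := fun h => hM₂ (h ▸ le_sup_left)
    have hY : Module.finrank K ↥(Msub θ H₂ ⊔ Msub θ H₀) = n :=
      join_hyp hfixpts hH₂ hH₀ hM₂M₀
    have hZ : Module.finrank K ↥(Msub θ H₂ ⊔ Msub θ H₁) = n :=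
      join_hyp hfixpts hH₂ hH₁ hM₂M₁
    have hYZ : Msub θ H₂ ⊔ Msub θ H₀ ≠ Msub θ H₂ ⊔ Msub θ H₁ := by
      intro h
      apply hM₂
      have hle : A₁.1 ≤ Msub θ H₂ ⊔ Msub θ H₀ :=
        sup_le (h ▸ le_sup_right) le_sup_right
      have : A₁.1 = Msub θ H₂ ⊔ Msub θ H₀ := eq_of_le_finrank hle (by rw [hY, A₁.2])
      exact this ▸ le_sup_left
    have hYZtop : Module.finrank K ↥((Msub θ H₂ ⊔ Msub θ H₀) ⊔ (Msub θ H₂ ⊔ Msub θ H₁))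
        = n + 1 := by
      have hlt : Msub θ H₂ ⊔ Msub θ H₀ < (Msub θ H₂ ⊔ Msub θ H₀) ⊔ (Msub θ H₂ ⊔ Msub θ H₁) := by
        refine lt_of_le_of_ne le_sup_left (fun he => hYZ ?_)
        exact (eq_of_le_finrank (le_trans le_sup_right he.ge) (by rw [hY, hZ])).symm
      have h1 := finrank_lt_of_lt hlt
      have h2 := finrank_le' ((Msub θ H₂ ⊔ Msub θ H₀) ⊔ (Msub θ H₂ ⊔ Msub θ H₁))
      rw [hY] at h1
      omega
    have hσ₂ : Msub θ H₁ ⊓ Msub θ H₀ ≤ Msub θ H₂ := by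
      have hsi := finrank_sup_inf (Msub θ H₂ ⊔ Msub θ H₀) (Msub θ H₂ ⊔ Msub θ H₁)
      rw [hYZtop, hY, hZ] at hsi
      have hle : Msub θ H₂ ≤ (Msub θ H₂ ⊔ Msub θ H₀) ⊓ (Msub θ H₂ ⊔ Msub θ H₁) :=
        le_inf le_sup_left le_sup_left
      have heq : Msub θ H₂ = (Msub θ H₂ ⊔ Msub θ H₀) ⊓ (Msub θ H₂ ⊔ Msub θ H₁) :=
        eq_of_le_finrank hle (by omega)
      rw [heq]
      exact le_inf (le_trans inf_le_right le_sup_right) (le_trans inf_le_left le_sup_right)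
    -- step 2 : every moving hyperplane contains σ
    have hallσ : ∀ H' : PGHyp n K, θ.hypMap H' ≠ H' → Msub θ H₁ ⊓ Msub θ H₀ ≤ H'.1 := by
      intro H' hH'
      by_contra hσH'
      have hfm' := finrank_Msub hH'
      have hσM' : ¬ Msub θ H₁ ⊓ Msub θ H₀ ≤ Msub θ H' :=
        fun h => hσH' (le_trans h inf_le_left)
      have hne₀ : Msub θ H' ≠ Msub θ H₀ := fun h => hσM' (h ▸ inf_le_right)
      have hne₁ : Msub θ H' ≠ Msub θ H₁ := fun h => hσM' (h ▸ inf_le_left)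
      have hne₂ : Msub θ H' ≠ Msub θ H₂ := fun h => hσM' (h ▸ hσ₂)
      have ha : Module.finrank K ↥(Msub θ H' ⊔ Msub θ H₀) = n :=
        join_hyp hfixpts hH' hH₀ hne₀
      have hb : Module.finrank K ↥(Msub θ H' ⊔ Msub θ H₁) = n :=
        join_hyp hfixpts hH' hH₁ hne₁
      by_cases hab : Msub θ H' ⊔ Msub θ H₀ = Msub θ H' ⊔ Msub θ H₁
      · -- a = b forces M' ≤ A₁, then contradiction with H₂
        have hA₁a : A₁.1 ≤ Msub θ H' ⊔ Msub θ H₀ :=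
          sup_le (hab ▸ le_sup_right) le_sup_right
        have hA₁eq : A₁.1 = Msub θ H' ⊔ Msub θ H₀ := eq_of_le_finrank hA₁a (by rw [ha, A₁.2])
        have hM'A₁ : Msub θ H' ≤ A₁.1 := hA₁eq ▸ le_sup_left
        -- M' ⊔ σ = A₁
        have hlt : Msub θ H' < Msub θ H' ⊔ (Msub θ H₁ ⊓ Msub θ H₀) :=
          lt_of_le_of_ne le_sup_left (fun he => hσM' (he ▸ le_sup_right))
        have hfr1 := finrank_lt_of_lt hlt
        have hleA : Msub θ H' ⊔ (Msub θ H₁ ⊓ Msub θ H₀) ≤ A₁.1 :=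
          sup_le hM'A₁ (le_trans inf_le_left le_sup_left)
        have heqA : Msub θ H' ⊔ (Msub θ H₁ ⊓ Msub θ H₀) = A₁.1 :=
          eq_of_le_finrank hleA (by rw [A₁.2]; omega)
        -- D := M' ⊔ M₂ has rank n and contains A₁, contradiction
        have hD : Module.finrank K ↥(Msub θ H' ⊔ Msub θ H₂) = n :=
          join_hyp hfixpts hH' hH₂ hne₂
        have hA₁D : A₁.1 ≤ Msub θ H' ⊔ Msub θ H₂ := by
          rw [← heqA]
          exact sup_le le_sup_left (le_trans hσ₂ le_sup_right)
        have : A₁.1 = Msub θ H' ⊔ Msub θ H₂ := eq_of_le_finrank hA₁D (by rw [hD, A₁.2])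
        exact hM₂ (this ▸ le_sup_right)
      · -- a ≠ b : M' = a ⊓ b ⊇ σ, contradiction
        have habtop : Module.finrank K
            ↥((Msub θ H' ⊔ Msub θ H₀) ⊔ (Msub θ H' ⊔ Msub θ H₁)) = n + 1 := by
          have hlt : Msub θ H' ⊔ Msub θ H₀ <
              (Msub θ H' ⊔ Msub θ H₀) ⊔ (Msub θ H' ⊔ Msub θ H₁) := by
            refine lt_of_le_of_ne le_sup_left (fun he => hab ?_)
            exact (eq_of_le_finrank (le_trans le_sup_right he.ge) (by rw [ha, hb])).symm
          have h1 := finrank_lt_of_lt hlt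
          have h2 := finrank_le' ((Msub θ H' ⊔ Msub θ H₀) ⊔ (Msub θ H' ⊔ Msub θ H₁))
          rw [ha] at h1
          omega
        have hsi := finrank_sup_inf (Msub θ H' ⊔ Msub θ H₀) (Msub θ H' ⊔ Msub θ H₁)
        rw [habtop, ha, hb] at hsi
        have hle : Msub θ H' ≤ (Msub θ H' ⊔ Msub θ H₀) ⊓ (Msub θ H' ⊔ Msub θ H₁) :=
          le_inf le_sup_left le_sup_left
        have heq : Msub θ H' = (Msub θ H' ⊔ Msub θ H₀) ⊓ (Msub θ H' ⊔ Msub θ H₁) :=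
          eq_of_le_finrank hle (by omega)
        apply hσM'
        rw [heq]
        exact le_inf (le_trans inf_le_right le_sup_right) (le_trans inf_le_left le_sup_right)
    -- step 3 : σ lies on every moving line
    have hσL : ∀ p : PGPoint n K, θ.ptMap p ≠ p → Msub θ H₁ ⊓ Msub θ H₀ ≤ Lline θ p := by
      intro p hp
      by_contra hc
      obtain ⟨s, hsσ, hsL⟩ := SetLike.not_le_iff_exists.1 hc
      have hsp : s ∉ p.submodule := fun h => hsL (pt_le_Lline p h)
      obtain ⟨H, hHle, hHw, hHs⟩ := exists_hyp_avoid2 (rep_ptMap_not_mem hp) hsp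
      have hpH : PGIncid p H := hHle
      have hptH : ¬ PGIncid (θ.ptMap p) H := fun hmem => hHw (incid_iff_rep_mem.1 hmem)
      have hHmov : θ.hypMap H ≠ H := moving_hyp_of hpH hptH
      exact hHs (hallσ H hHmov hsσ)
    -- step 4 : dimension count forces n = 3 and all moving points on one line
    have hcσ : c.rep ∉ Msub θ H₁ ⊓ Msub θ H₀ := by
      intro h
      apply hH₀
      apply hcH H₀
      rw [incid_iff_rep_mem]
      exact (inf_le_right : Msub θ H₁ ⊓ Msub θ H₀ ≤ Msub θ H₀) h |>.1
    have hfrc : Module.finrank K ↥((Msub θ H₁ ⊓ Msub θ H₀) ⊔ (K ∙ c.rep)) + 1 = n := by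
      rw [finrank_sup_span (Projectivization.rep_nonzero c) hcσ]
      omega
    have hlep₀ : (Msub θ H₁ ⊓ Msub θ H₀) ⊔ (K ∙ c.rep) ≤ Lline θ p₀ := by
      refine sup_le (hσL p₀ hp₀) ?_
      rw [← Projectivization.submodule_eq]
      exact hcL p₀ hp₀
    have hn3 : n = 3 := by
      have := Submodule.finrank_mono hlep₀
      rw [finrank_Lline hp₀] at this
      omega
    have hallpts : ∀ p : PGPoint n K, θ.ptMap p ≠ p →
        p.submodule ≤ (Msub θ H₁ ⊓ Msub θ H₀) ⊔ (K ∙ c.rep) := by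
      intro p hp
      have hlep : (Msub θ H₁ ⊓ Msub θ H₀) ⊔ (K ∙ c.rep) ≤ Lline θ p := by
        refine sup_le (hσL p hp) ?_
        rw [← Projectivization.submodule_eq]
        exact hcL p hp
      have heq : (Msub θ H₁ ⊓ Msub θ H₀) ⊔ (K ∙ c.rep) = Lline θ p :=
        eq_of_le_finrank hlep (by rw [finrank_Lline hp]; omega)
      rw [heq]
      exact pt_le_Lline p
    apply hH₀
    apply stab_of_moving_in _ hallpts
    intro hle
    have := Submodule.finrank_mono hle
    rw [H₀.2] at this
    omega

end Axis2
/-- A nontrivial collineation `θ` of `PG(n,K)`, `n ≥ 3`, such that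
every point of `H ∩ H^θ` is fixed whenever `H ≠ H^θ`, and every hyperplane through
`p` and `p^θ` is stabilised whenever `p ≠ p^θ`, is a central collineation: it fixes
a hyperplane pointwise and fixes all hyperplanes through some point. -/
theorem stmt_11 (n : ℕ) (hn : 3 ≤ n) (K : Type) [DivisionRing K]
    (θ : PGCollineation n K)
    (hnontriv : (∃ p : PGPoint n K, θ.ptMap p ≠ p) ∨ (∃ H : PGHyp n K, θ.hypMap H ≠ H))
    (hfixpts : ∀ H : PGHyp n K, θ.hypMap H ≠ H →
      ∀ p : PGPoint n K, PGIncid p H → PGIncid p (θ.hypMap H) → θ.ptMap p = p)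
    (hstabhyps : ∀ p : PGPoint n K, θ.ptMap p ≠ p →
      ∀ H : PGHyp n K, PGIncid p H → PGIncid (θ.ptMap p) H → θ.hypMap H = H) :
    (∃ A : PGHyp n K, ∀ p : PGPoint n K, PGIncid p A → θ.ptMap p = p) ∧
    (∃ c : PGPoint n K, ∀ H : PGHyp n K, PGIncid c H → θ.hypMap H = H) := by
  obtain ⟨p₀, hp₀⟩ := exists_moving_pt hnontriv
  obtain ⟨H₀, hH₀⟩ := exists_moving_hyp hnontriv
  obtain ⟨c, hc⟩ := center_concurrent hn hstabhyps hp₀ hH₀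
  have hcenter := center_good hn hstabhyps hc
  obtain ⟨A, hA⟩ := axis_concurrent hn hfixpts hH₀ hp₀ hc hcenter
  exact ⟨⟨A, axis_good hn hfixpts hA⟩, ⟨c, hcenter⟩⟩
end

section
/- Let θ be a duality of PG(n,K), n ≥ 2, such that θ maps no incident point-hyperplane flag to a symplectic flag nor to a special flag. Then θ is anisotropic, that is, for every point p we have p ∉ p^θ (no point is incident with its image hyperplane), and every flag is mapped to an opposite flag. -/
section Aux

variable {n : ℕ} {K : Type} [DivisionRing K]

/-- The kernel of a nonzero linear functional on `K^{n+1}` is a hyperplane. -/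
lemma finrank_ker_eq (f : (Fin (n + 1) → K) →ₗ[K] K) (x : Fin (n + 1) → K) (hx : f x ≠ 0) :
    Module.finrank K (LinearMap.ker f) = n := by
  have hsurj : Function.Surjective f := by
    intro c
    refine ⟨(c * (f x)⁻¹) • x, ?_⟩
    rw [map_smul, smul_eq_mul, mul_assoc, inv_mul_cancel₀ hx, mul_one]
  have hr : LinearMap.range f = ⊤ := LinearMap.range_eq_top.mpr hsurj
  have h := LinearMap.finrank_range_add_finrank_ker f
  rw [hr, finrank_top, Module.finrank_self, Module.finrank_fin_fun] at h
  omega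

/-- Given `n ≥ 2`, through every point of `PG(n,K)` there pass at least three
distinct hyperplanes. -/
lemma exists_three_hyps (hn : 2 ≤ n) (p : PGPoint n K) :
    ∃ H1 H2 H3 : PGHyp n K, H1 ≠ H2 ∧ H1 ≠ H3 ∧ H2 ≠ H3 ∧
      PGIncid p H1 ∧ PGIncid p H2 ∧ PGIncid p H3 := by
  set v := p.rep with hv
  have hv0 : v ≠ 0 := p.rep_nonzero
  obtain ⟨i₀, hi₀⟩ : ∃ i, v i ≠ 0 := by
    by_contra h
    push_neg at h
    exact hv0 (funext h)
  -- pick two indices distinct from `i₀`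
  obtain ⟨j₁, hj₁, j₂, hj₂, hjne⟩ :
      ∃ a ∈ (Finset.univ.erase i₀), ∃ b ∈ (Finset.univ.erase i₀), a ≠ b := by
    apply Finset.one_lt_card.mp
    have : (Finset.univ.erase i₀).card = n := by
      rw [Finset.card_erase_of_mem (Finset.mem_univ _), Finset.card_univ, Fintype.card_fin]
      omega
    omega
  have hj₁i : j₁ ≠ i₀ := Finset.ne_of_mem_erase hj₁
  have hj₂i : j₂ ≠ i₀ := Finset.ne_of_mem_erase hj₂
  -- linear functionals vanishing at `v`
  set f : Fin (n + 1) → ((Fin (n + 1) → K) →ₗ[K] K) := fun j =>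
    LinearMap.proj j - (LinearMap.toSpanSingleton K K ((v i₀)⁻¹ * v j)).comp
      (LinearMap.proj (R := K) (φ := fun _ : Fin (n + 1) => K) i₀) with hf
  have hfval : ∀ j x, f j x = x j - x i₀ * ((v i₀)⁻¹ * v j) := by
    intro j x
    simp [hf, LinearMap.toSpanSingleton, smul_eq_mul]
  have hfv : ∀ j, f j v = 0 := by
    intro j
    rw [hfval, ← mul_assoc, mul_inv_cancel₀ hi₀, one_mul, sub_self]
  -- evaluation on standard basis vectors away from `i₀`
  have hfe : ∀ j k : Fin (n + 1), k ≠ i₀ →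
      f j (Pi.single k 1) = if j = k then 1 else 0 := by
    intro j k hk
    rw [hfval]
    simp [Pi.single_apply, Ne.symm hk, eq_comm]
  have e1 : (f j₁) (Pi.single j₁ 1) = 1 := by rw [hfe _ _ hj₁i, if_pos rfl]
  have e2 : (f j₂) (Pi.single j₁ 1) = 0 := by rw [hfe _ _ hj₁i, if_neg hjne.symm]
  have e3 : (f j₁) (Pi.single j₂ 1) = 0 := by rw [hfe _ _ hj₂i, if_neg hjne]
  have e4 : (f j₂) (Pi.single j₂ 1) = 1 := by rw [hfe _ _ hj₂i, if_pos rfl]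
  have e5 : (f j₁ + f j₂) (Pi.single j₁ 1) = 1 := by
    rw [LinearMap.add_apply, e1, e2, add_zero]
  have e6 : (f j₁ + f j₂) (Pi.single j₂ 1) = 1 := by
    rw [LinearMap.add_apply, e3, e4, zero_add]
  have r1 : Module.finrank K (LinearMap.ker (f j₁)) = n :=
    finrank_ker_eq _ _ (by rw [e1]; exact one_ne_zero)
  have r2 : Module.finrank K (LinearMap.ker (f j₂)) = n :=
    finrank_ker_eq _ _ (by rw [e4]; exact one_ne_zero)
  have r3 : Module.finrank K (LinearMap.ker (f j₁ + f j₂)) = n :=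
    finrank_ker_eq _ _ (by rw [e5]; exact one_ne_zero)
  have key : ∀ (a b : (Fin (n + 1) → K) →ₗ[K] K) (x : Fin (n + 1) → K),
      a x = 0 → b x ≠ 0 → LinearMap.ker a ≠ LinearMap.ker b := by
    intro a b x h0 h1 h
    have hx : x ∈ LinearMap.ker b := h ▸ LinearMap.mem_ker.mpr h0
    exact h1 (LinearMap.mem_ker.mp hx)
  have hinc : ∀ (a : (Fin (n + 1) → K) →ₗ[K] K) (h : Module.finrank K (LinearMap.ker a) = n),
      a v = 0 → PGIncid p (⟨LinearMap.ker a, h⟩ : PGHyp n K) := by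
    intro a h hav
    show p.submodule ≤ _
    rw [Projectivization.submodule_eq, ← hv]
    exact (Submodule.span_singleton_le_iff_mem _ _).mpr (LinearMap.mem_ker.mpr hav)
  refine ⟨⟨LinearMap.ker (f j₁), r1⟩, ⟨LinearMap.ker (f j₂), r2⟩,
    ⟨LinearMap.ker (f j₁ + f j₂), r3⟩, ?_, ?_, ?_, ?_, ?_, ?_⟩
  · exact fun h => key _ _ _ e3 (by rw [e4]; exact one_ne_zero) (congrArg Subtype.val h)
  · exact fun h => key _ _ _ e3 (by rw [e6]; exact one_ne_zero) (congrArg Subtype.val h)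
  · exact fun h => key _ _ _ e2 (by rw [e5]; exact one_ne_zero) (congrArg Subtype.val h)
  · exact hinc _ _ (hfv j₁)
  · exact hinc _ _ (hfv j₂)
  · exact hinc _ _ (by rw [LinearMap.add_apply, hfv, hfv, add_zero])

end Aux

/-- A duality `θ` of `PG(n,K)`, `n ≥ 2`, mapping no incident flag to a
symplectic flag nor to a special flag is anisotropic: no point is incident with its
image hyperplane, and in fact every incident flag is mapped to an opposite flag. -/
theorem stmt_12 (n : ℕ) (hn : 2 ≤ n) (K : Type) [DivisionRing K]
    (θ : PGDuality n K)
    (hkang : ∀ (p : PGPoint n K) (H : PGHyp n K), PGIncid p H →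
      ¬ FlagSymplectic p (θ.hypMap H) H (θ.ptMap p) ∧
      ¬ FlagSpecial p (θ.hypMap H) H (θ.ptMap p)) :
    (∀ p : PGPoint n K, ¬ PGIncid p (θ.ptMap p)) ∧
    (∀ (p : PGPoint n K) (H : PGHyp n K), PGIncid p H →
      FlagOpp p (θ.hypMap H) H (θ.ptMap p)) := by
  have aniso : ∀ p : PGPoint n K, ¬ PGIncid p (θ.ptMap p) := by
    intro p hp
    obtain ⟨H1, H2, H3, h12, h13, h23, hi1, hi2, hi3⟩ := exists_three_hyps hn p
    -- each hyperplane through `p` must be `θ.ptMap p` or `θ.hypMap.symm p`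
    have key : ∀ H : PGHyp n K, PGIncid p H → H = θ.ptMap p ∨ H = θ.hypMap.symm p := by
      intro H hpH
      obtain ⟨hsymp, hspec⟩ := hkang p H hpH
      have hcross : PGIncid (θ.hypMap H) H := by
        by_contra hc
        exact hspec (Or.inl ⟨hp, hc⟩)
      by_contra hcon
      push_neg at hcon
      obtain ⟨h1, h2⟩ := hcon
      refine hsymp ⟨hp, hcross, ?_, h1⟩
      intro hpe
      exact h2 (by rw [hpe, Equiv.symm_apply_apply])
    rcases key H1 hi1 with h1 | h1 <;> rcases key H2 hi2 with h2 | h2 <;>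
      rcases key H3 hi3 with h3 | h3 <;>
      first
        | exact h12 (h1.trans h2.symm)
        | exact h13 (h1.trans h3.symm)
        | exact h23 (h2.trans h3.symm)
  refine ⟨aniso, fun p H hpH => ⟨aniso p, ?_⟩⟩
  intro hc
  exact (hkang p H hpH).2 (Or.inr ⟨hc, aniso p⟩)
end

section
/- Let θ be a collineation of PG(2,K) (a projective plane over a skew field) such that for every point p with p ≠ p^θ, the line through p and p^θ is fixed setwise by θ, and dually for every line L with L ≠ L^θ, the intersection point L ∩ L^θ is fixed by θ. Then either θ fixes a point c and all lines through c (θ is a central collineation), or the fixed points and fixed lines of θ form a Baer subplane (every line of PG(2,K) contains a fixed point and every point lies on a fixed line). -/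
section Helpers
variable {K : Type} [DivisionRing K]

lemma frV3 : Module.finrank K (Fin 3 → K) = 3 := by simp

lemma sub_eq_of_le_one {A B : Submodule K (Fin 3 → K)} (hA : Module.finrank K A = 1)
    (hB : Module.finrank K B = 1) (h : A ≤ B) : A = B :=
  Submodule.eq_of_le_of_finrank_le h (by rw [hA, hB])

lemma point_eq_point {p q : PGPoint 2 K} (h : p.submodule = q.submodule) : p = q :=
  Projectivization.submodule_injective h

lemma point_sub_ne {p q : PGPoint 2 K} (h : p ≠ q) : p.submodule ≠ q.submodule :=
  fun he => h (point_eq_point he)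

lemma inf_one_bot {A B : Submodule K (Fin 3 → K)} (hA : Module.finrank K A = 1)
    (hB : Module.finrank K B = 1) (hne : A ≠ B) : A ⊓ B = ⊥ := by
  by_contra h
  obtain ⟨x, hx, hx0⟩ := (Submodule.ne_bot_iff _).mp h
  have h1 : Submodule.span K {x} ≤ A ⊓ B := by rwa [Submodule.span_singleton_le_iff_mem]
  have hsx : Module.finrank K (Submodule.span K {x}) = 1 := finrank_span_singleton hx0
  have hA' := sub_eq_of_le_one hsx hA (h1.trans inf_le_left)
  have hB' := sub_eq_of_le_one hsx hB (h1.trans inf_le_right)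
  exact hne (hA'.symm.trans hB')

lemma finrank_sup_two {A B : Submodule K (Fin 3 → K)} (hA : Module.finrank K A = 1)
    (hB : Module.finrank K B = 1) (hne : A ≠ B) :
    Module.finrank K (A ⊔ B : Submodule K (Fin 3 → K)) = 2 := by
  have h := Submodule.finrank_sup_add_finrank_inf_eq A B
  rw [inf_one_bot hA hB hne, finrank_bot, hA, hB] at h
  omega

lemma line_unique {p q : PGPoint 2 K} (h : p ≠ q) {L M : PGHyp 2 K}
    (h1 : PGIncid p L) (h2 : PGIncid q L) (h3 : PGIncid p M) (h4 : PGIncid q M) : L = M := by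
  have key : ∀ N : PGHyp 2 K, PGIncid p N → PGIncid q N →
      p.submodule ⊔ q.submodule = N.1 := fun N hn1 hn2 =>
    Submodule.eq_of_le_of_finrank_le (sup_le hn1 hn2)
      (by rw [N.2, finrank_sup_two p.finrank_submodule q.finrank_submodule (point_sub_ne h)])
  exact Subtype.ext ((key L h1 h2).symm.trans (key M h3 h4))

lemma line_exists {p q : PGPoint 2 K} (h : p ≠ q) :
    ∃ L : PGHyp 2 K, PGIncid p L ∧ PGIncid q L :=
  ⟨⟨p.submodule ⊔ q.submodule,
    finrank_sup_two p.finrank_submodule q.finrank_submodule (point_sub_ne h)⟩,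
    le_sup_left, le_sup_right⟩

lemma hyp_sub_ne {L M : PGHyp 2 K} (h : L ≠ M) : L.1 ≠ M.1 := fun he => h (Subtype.ext he)

lemma line_inf_one {L M : PGHyp 2 K} (h : L ≠ M) :
    Module.finrank K (L.1 ⊓ M.1 : Submodule K (Fin 3 → K)) = 1 := by
  have hlt : L.1 < L.1 ⊔ M.1 := by
    rcases lt_or_eq_of_le (le_sup_left : L.1 ≤ L.1 ⊔ M.1) with h' | h'
    · exact h'
    · exfalso
      have hm : M.1 ≤ L.1 := h' ▸ le_sup_right
      exact hyp_sub_ne h ((Submodule.eq_of_le_of_finrank_le hm (by rw [L.2, M.2])).symm)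
  have h2 := Submodule.finrank_lt_finrank_of_lt hlt
  have h3 : Module.finrank K (L.1 ⊔ M.1 : Submodule K (Fin 3 → K)) ≤ 3 := by
    have := Submodule.finrank_le (L.1 ⊔ M.1)
    rwa [frV3] at this
  have h2' : 2 < Module.finrank K (L.1 ⊔ M.1 : Submodule K (Fin 3 → K)) := by
    conv_lhs => rw [← L.2]
    exact h2
  have h4 : Module.finrank K (L.1 ⊔ M.1 : Submodule K (Fin 3 → K)) +
      Module.finrank K (L.1 ⊓ M.1 : Submodule K (Fin 3 → K)) = 2 + 2 := by
    have h5 := Submodule.finrank_sup_add_finrank_inf_eq L.1 M.1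
    rw [L.2, M.2] at h5
    exact h5
  omega

lemma meet_exists {L M : PGHyp 2 K} (h : L ≠ M) :
    ∃ x : PGPoint 2 K, PGIncid x L ∧ PGIncid x M := by
  obtain ⟨x, hx⟩ := (Projectivization.equivSubmodule K (Fin 3 → K)).surjective
    ⟨L.1 ⊓ M.1, line_inf_one h⟩
  have hx' : x.submodule = L.1 ⊓ M.1 := congrArg Subtype.val hx
  refine ⟨x, ?_, ?_⟩
  · show x.submodule ≤ L.1
    rw [hx']; exact inf_le_left
  · show x.submodule ≤ M.1
    rw [hx']; exact inf_le_right

lemma meet_unique {L M : PGHyp 2 K} (h : L ≠ M) {x y : PGPoint 2 K}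
    (h1 : PGIncid x L) (h2 : PGIncid x M) (h3 : PGIncid y L) (h4 : PGIncid y M) : x = y := by
  have hx := sub_eq_of_le_one x.finrank_submodule (line_inf_one h) (le_inf h1 h2)
  have hy := sub_eq_of_le_one y.finrank_submodule (line_inf_one h) (le_inf h3 h4)
  exact point_eq_point (hx.trans hy.symm)

lemma three_points_on (H : PGHyp 2 K) : ∃ a b c : PGPoint 2 K,
    a ≠ b ∧ a ≠ c ∧ b ≠ c ∧ PGIncid a H ∧ PGIncid b H ∧ PGIncid c H := by
  have hH2 := H.2
  have hne : H.1 ≠ ⊥ := by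
    intro hb; rw [hb, finrank_bot] at hH2; omega
  obtain ⟨u, huH, hu0⟩ := (Submodule.ne_bot_iff _).mp hne
  have hsu : Submodule.span K {u} ≤ H.1 := by rwa [Submodule.span_singleton_le_iff_mem]
  have hlt : Submodule.span K {u} < H.1 := by
    rcases lt_or_eq_of_le hsu with h' | h'
    · exact h'
    · exfalso
      have := finrank_span_singleton (K := K) hu0
      rw [h', hH2] at this; omega
  obtain ⟨v, hvH, hvu⟩ := SetLike.exists_of_lt hlt
  have hv0 : v ≠ 0 := fun h => hvu (h ▸ Submodule.zero_mem _)
  have huv0 : u + v ≠ 0 := by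
    intro h
    have : v = -u := by linear_combination (norm := module) h
    exact hvu (this ▸ Submodule.neg_mem _ (Submodule.mem_span_singleton_self u))
  refine ⟨Projectivization.mk K u hu0, Projectivization.mk K v hv0,
    Projectivization.mk K (u + v) huv0, ?_, ?_, ?_, ?_, ?_, ?_⟩
  · intro h
    have := congrArg Projectivization.submodule h
    rw [Projectivization.submodule_mk, Projectivization.submodule_mk] at this
    exact hvu (this ▸ Submodule.mem_span_singleton_self v)
  · intro h
    have := congrArg Projectivization.submodule h
    rw [Projectivization.submodule_mk, Projectivization.submodule_mk] at this
    have huvm : u + v ∈ Submodule.span K {u} :=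
      this ▸ Submodule.mem_span_singleton_self (u + v)
    have : v ∈ Submodule.span K {u} := by
      have := Submodule.sub_mem _ huvm (Submodule.mem_span_singleton_self u)
      simpa using this
    exact hvu this
  · intro h
    have := congrArg Projectivization.submodule h
    rw [Projectivization.submodule_mk, Projectivization.submodule_mk] at this
    have huvm : u + v ∈ Submodule.span K {v} :=
      this ▸ Submodule.mem_span_singleton_self (u + v)
    have hum : u ∈ Submodule.span K {v} := by
      have := Submodule.sub_mem _ huvm (Submodule.mem_span_singleton_self v)
      simpa using this
    obtain ⟨c, hc⟩ := Submodule.mem_span_singleton.mp hum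
    have hc0 : c ≠ 0 := by rintro rfl; rw [zero_smul] at hc; exact hu0 hc.symm
    have : v = c⁻¹ • u := by rw [← hc, inv_smul_smul₀ hc0]
    exact hvu (this ▸ Submodule.smul_mem _ _ (Submodule.mem_span_singleton_self u))
  · show (Projectivization.mk K u hu0).submodule ≤ H.1
    rwa [Projectivization.submodule_mk, Submodule.span_singleton_le_iff_mem]
  · show (Projectivization.mk K v hv0).submodule ≤ H.1
    rwa [Projectivization.submodule_mk, Submodule.span_singleton_le_iff_mem]
  · show (Projectivization.mk K (u + v) huv0).submodule ≤ H.1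
    rw [Projectivization.submodule_mk, Submodule.span_singleton_le_iff_mem]
    exact Submodule.add_mem _ huH hvH

set_option maxHeartbeats 2000000 in
lemma three_lines_through (q : PGPoint 2 K) : ∃ L M N : PGHyp 2 K,
    L ≠ M ∧ L ≠ N ∧ M ≠ N ∧ PGIncid q L ∧ PGIncid q M ∧ PGIncid q N := by
  obtain ⟨C, hC⟩ := Submodule.exists_isCompl q.submodule
  have hCfr : Module.finrank K C = 2 := by
    have h1 := Submodule.finrank_add_eq_of_isCompl hC
    have h2 : Module.finrank K q.submodule + Module.finrank K C = 3 := by rw [h1, frV3]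
    rw [q.finrank_submodule] at h2
    omega
  have hCne : C ≠ ⊥ := by intro hb; rw [hb, finrank_bot] at hCfr; omega
  obtain ⟨u, huC, hu0⟩ := (Submodule.ne_bot_iff _).mp hCne
  have hsu : Submodule.span K {u} ≤ C := by rwa [Submodule.span_singleton_le_iff_mem]
  have hlt : Submodule.span K {u} < C := by
    rcases lt_or_eq_of_le hsu with h' | h'
    · exact h'
    · exfalso
      have := finrank_span_singleton (K := K) hu0
      rw [h', hCfr] at this; omega
  obtain ⟨v, hvC, hvu⟩ := SetLike.exists_of_lt hlt
  have hv0 : v ≠ 0 := fun h => hvu (h ▸ Submodule.zero_mem _)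
  have hsv : Submodule.span K {v} ≤ C := by rwa [Submodule.span_singleton_le_iff_mem]
  have hsw : Submodule.span K {u + v} ≤ C := by
    rw [Submodule.span_singleton_le_iff_mem]; exact Submodule.add_mem _ huC hvC
  have key : ∀ x : Fin 3 → K, x ≠ 0 → Submodule.span K {x} ≤ C →
      Module.finrank K (q.submodule ⊔ Submodule.span K {x} : Submodule K (Fin 3 → K)) = 2 := by
    intro x hx0 hxC
    have hinf : q.submodule ⊓ Submodule.span K {x} = ⊥ := by
      apply le_bot_iff.mp
      calc q.submodule ⊓ Submodule.span K {x} ≤ q.submodule ⊓ C := inf_le_inf_left _ hxC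
        _ = ⊥ := hC.disjoint.eq_bot
    have h5 := Submodule.finrank_sup_add_finrank_inf_eq q.submodule (Submodule.span K {x})
    rw [hinf, finrank_bot, q.finrank_submodule, finrank_span_singleton hx0] at h5
    have h6 : Module.finrank K
        (q.submodule ⊔ Submodule.span K {x} : Submodule K (Fin 3 → K)) + 0 = 1 + 1 := h5
    omega
  have huv0 : u + v ≠ 0 := by
    intro h
    have : v = -u := by linear_combination (norm := module) h
    exact hvu (this ▸ Submodule.neg_mem _ (Submodule.mem_span_singleton_self u))
  have hneuv : Submodule.span K {u} ≠ Submodule.span K {v} := by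
    intro h
    exact hvu (h ▸ Submodule.mem_span_singleton_self v)
  have huvC : Submodule.span K {u} ⊔ Submodule.span K {v} = C := by
    apply Submodule.eq_of_le_of_finrank_le (sup_le hsu hsv)
    rw [hCfr, finrank_sup_two (finrank_span_singleton hu0) (finrank_span_singleton hv0) hneuv]
  have htop : ∀ N : Submodule K (Fin 3 → K), Module.finrank K N = 2 →
      u ∈ N → v ∈ N → q.submodule ≤ N → False := by
    intro N hN hu hv hq
    have hle : (⊤ : Submodule K (Fin 3 → K)) ≤ N := by
      rw [← hC.sup_eq_top]
      refine sup_le hq ?_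
      rw [← huvC]
      refine sup_le ?_ ?_ <;> rw [Submodule.span_singleton_le_iff_mem] <;> assumption
    have hNtop : N = ⊤ := top_le_iff.mp hle
    rw [hNtop, finrank_top, frV3] at hN
    omega
  refine ⟨⟨q.submodule ⊔ Submodule.span K {u}, key u hu0 hsu⟩,
    ⟨q.submodule ⊔ Submodule.span K {v}, key v hv0 hsv⟩,
    ⟨q.submodule ⊔ Submodule.span K {u + v}, key (u + v) huv0 hsw⟩, ?_, ?_, ?_,
    le_sup_left, le_sup_left, le_sup_left⟩
  · intro he
    have he' : q.submodule ⊔ Submodule.span K {u} = q.submodule ⊔ Submodule.span K {v} :=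
      congrArg Subtype.val he
    refine htop _ (key u hu0 hsu)
      (Submodule.mem_sup_right (Submodule.mem_span_singleton_self u)) ?_ le_sup_left
    rw [he']
    exact Submodule.mem_sup_right (Submodule.mem_span_singleton_self v)
  · intro he
    have he' : q.submodule ⊔ Submodule.span K {u} = q.submodule ⊔ Submodule.span K {u + v} :=
      congrArg Subtype.val he
    refine htop _ (key u hu0 hsu)
      (Submodule.mem_sup_right (Submodule.mem_span_singleton_self u)) ?_ le_sup_left
    have hw : u + v ∈ q.submodule ⊔ Submodule.span K {u} := by
      rw [he']
      exact Submodule.mem_sup_right (Submodule.mem_span_singleton_self (u + v))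
    have hu' : u ∈ q.submodule ⊔ Submodule.span K {u} :=
      Submodule.mem_sup_right (Submodule.mem_span_singleton_self u)
    have := Submodule.sub_mem _ hw hu'
    simpa using this
  · intro he
    have he' : q.submodule ⊔ Submodule.span K {v} = q.submodule ⊔ Submodule.span K {u + v} :=
      congrArg Subtype.val he
    refine htop _ (key v hv0 hsv) ?_
      (Submodule.mem_sup_right (Submodule.mem_span_singleton_self v)) le_sup_left
    have hw : u + v ∈ q.submodule ⊔ Submodule.span K {v} := by
      rw [he']
      exact Submodule.mem_sup_right (Submodule.mem_span_singleton_self (u + v))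
    have hv' : v ∈ q.submodule ⊔ Submodule.span K {v} :=
      Submodule.mem_sup_right (Submodule.mem_span_singleton_self v)
    have := Submodule.sub_mem _ hw hv'
    simpa using this

lemma two_points_on_off {H L : PGHyp 2 K} (hHL : H ≠ L) :
    ∃ a b : PGPoint 2 K, a ≠ b ∧ PGIncid a H ∧ PGIncid b H ∧ ¬PGIncid a L ∧ ¬PGIncid b L := by
  obtain ⟨a, b, c, hab, hac, hbc, haH, hbH, hcH⟩ := three_points_on H
  by_cases haL : PGIncid a L
  · exact ⟨b, c, hbc, hbH, hcH, fun hbL => hHL (line_unique hab haH hbH haL hbL),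
      fun hcL => hHL (line_unique hac haH hcH haL hcL)⟩
  · by_cases hbL : PGIncid b L
    · exact ⟨a, c, hac, haH, hcH, haL, fun hcL => hHL (line_unique hbc hbH hcH hbL hcL)⟩
    · exact ⟨a, b, hab, haH, hbH, haL, hbL⟩

lemma two_points_on_ne (H : PGHyp 2 K) (p : PGPoint 2 K) :
    ∃ a b : PGPoint 2 K, a ≠ b ∧ PGIncid a H ∧ PGIncid b H ∧ a ≠ p ∧ b ≠ p := by
  obtain ⟨a, b, c, hab, hac, hbc, haH, hbH, hcH⟩ := three_points_on H
  by_cases hap : a = p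
  · exact ⟨b, c, hbc, hbH, hcH, fun h => hab (hap.trans h.symm),
      fun h => hac (hap.trans h.symm)⟩
  · by_cases hbp : b = p
    · exact ⟨a, c, hac, haH, hcH, hap, fun h => hbc (hbp.trans h.symm)⟩
    · exact ⟨a, b, hab, haH, hbH, hap, hbp⟩

lemma two_lines_through_off {q p : PGPoint 2 K} (hpq : p ≠ q) :
    ∃ L M : PGHyp 2 K, L ≠ M ∧ PGIncid q L ∧ PGIncid q M ∧ ¬PGIncid p L ∧ ¬PGIncid p M := by
  obtain ⟨L, M, N, hLM, hLN, hMN, hqL, hqM, hqN⟩ := three_lines_through q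
  by_cases hpL : PGIncid p L
  · exact ⟨M, N, hMN, hqM, hqN, fun hpM => hpq (meet_unique hLM hpL hpM hqL hqM),
      fun hpN => hpq (meet_unique hLN hpL hpN hqL hqN)⟩
  · by_cases hpM : PGIncid p M
    · exact ⟨L, N, hLN, hqL, hqN, hpL, fun hpN => hpq (meet_unique hMN hpM hpN hqM hqN)⟩
    · exact ⟨L, M, hLM, hqL, hqM, hpL, hpM⟩

lemma exists_point_off (L : PGHyp 2 K) : ∃ c : PGPoint 2 K, ¬PGIncid c L := by
  have hne : L.1 ≠ ⊤ := by
    intro h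
    have h2 := L.2
    rw [h, finrank_top, frV3] at h2
    omega
  obtain ⟨x, -, hxL⟩ := SetLike.exists_of_lt (show L.1 < (⊤ : Submodule K (Fin 3 → K)) from lt_top_iff_ne_top.mpr hne)
  have hx0 : x ≠ 0 := fun h => hxL (h ▸ Submodule.zero_mem _)
  refine ⟨Projectivization.mk K x hx0, ?_⟩
  show (Projectivization.mk K x hx0).submodule ≤ L.1 → False
  rw [Projectivization.submodule_mk, Submodule.span_singleton_le_iff_mem]
  exact hxL

end Helpers

/-- Let `θ` be a collineation of the projective plane `PG(2,K)` such
that for every point `p` with `p ≠ p^θ` the line `p p^θ` is stabilised by `θ`, and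
for every line `L` with `L ≠ L^θ` the intersection point `L ∩ L^θ` is fixed by `θ`.
Then either `θ` is a central collineation (fixes a point `c` and all lines through
`c`), or the fixed points and fixed lines of `θ` form a Baer subplane: every line
contains a fixed point and every point lies on a fixed line. -/
theorem stmt_15 (K : Type) [DivisionRing K]
    (θ : PGCollineation 2 K)
    (hlines : ∀ p : PGPoint 2 K, θ.ptMap p ≠ p →
      ∃ H : PGHyp 2 K, PGIncid p H ∧ PGIncid (θ.ptMap p) H ∧ θ.hypMap H = H)
    (hpoints : ∀ H : PGHyp 2 K, θ.hypMap H ≠ H →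
      ∃ c : PGPoint 2 K, PGIncid c H ∧ PGIncid c (θ.hypMap H) ∧ θ.ptMap c = c) :
    (∃ c : PGPoint 2 K, θ.ptMap c = c ∧
      ∀ H : PGHyp 2 K, PGIncid c H → θ.hypMap H = H) ∨
    ((∀ H : PGHyp 2 K, ∃ p : PGPoint 2 K, θ.ptMap p = p ∧ PGIncid p H) ∧
     (∀ p : PGPoint 2 K, ∃ H : PGHyp 2 K, θ.hypMap H = H ∧ PGIncid p H)) := by

  -- basic stability lemmas
  have fixpt : ∀ {L M : PGHyp 2 K}, L ≠ M → θ.hypMap L = L → θ.hypMap M = M →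
      ∀ {x : PGPoint 2 K}, PGIncid x L → PGIncid x M → θ.ptMap x = x := by
    intro L M hne hL hM x hxL hxM
    have h1 : PGIncid (θ.ptMap x) L := by
      have := (θ.incid_iff x L).1 hxL
      rwa [hL] at this
    have h2 : PGIncid (θ.ptMap x) M := by
      have := (θ.incid_iff x M).1 hxM
      rwa [hM] at this
    exact meet_unique hne h1 h2 hxL hxM
  have fixline : ∀ {p q : PGPoint 2 K}, p ≠ q → θ.ptMap p = p → θ.ptMap q = q →
      ∀ {H : PGHyp 2 K}, PGIncid p H → PGIncid q H → θ.hypMap H = H := by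
    intro p q hne hp hq H hpH hqH
    have h1 : PGIncid p (θ.hypMap H) := by
      have := (θ.incid_iff p H).1 hpH
      rwa [hp] at this
    have h2 : PGIncid q (θ.hypMap H) := by
      have := (θ.incid_iff q H).1 hqH
      rwa [hq] at this
    exact line_unique hne h1 h2 hpH hqH
  -- Case 1: some fixed line without a fixed point on it
  by_cases hcase1 : ∃ L : PGHyp 2 K, θ.hypMap L = L ∧ ∀ x : PGPoint 2 K,
      θ.ptMap x = x → ¬PGIncid x L
  · obtain ⟨L, hL, hno⟩ := hcase1
    -- every point off L is fixed
    have step1 : ∀ q : PGPoint 2 K, ¬PGIncid q L → θ.ptMap q = q := by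
      intro q hqL
      by_contra hq
      obtain ⟨M, hqM, hqM', hM⟩ := hlines q hq
      have hML : M ≠ L := fun h => hqL (h ▸ hqM)
      obtain ⟨x, hxM, hxL⟩ := meet_exists hML
      exact hno x (fixpt hML hM hL hxM hxL) hxL
    obtain ⟨c, hcL⟩ := exists_point_off L
    refine Or.inl ⟨c, step1 c hcL, ?_⟩
    intro H hcH
    have hHL : H ≠ L := fun h => hcL (h ▸ hcH)
    obtain ⟨a, b, hab, haH, hbH, haL, hbL⟩ := two_points_on_off hHL
    exact fixline hab (step1 a haL) (step1 b hbL) haH hbH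
  -- Case 2: some fixed point with no fixed line through it
  by_cases hcase2 : ∃ p : PGPoint 2 K, θ.ptMap p = p ∧ ∀ M : PGHyp 2 K,
      θ.hypMap M = M → ¬PGIncid p M
  · obtain ⟨p, hp, hno⟩ := hcase2
    -- every line not through p is fixed
    have step1 : ∀ M : PGHyp 2 K, ¬PGIncid p M → θ.hypMap M = M := by
      intro M hpM
      by_contra hM
      obtain ⟨c, hcM, hcM', hc⟩ := hpoints M hM
      have hcp : c ≠ p := fun h => hpM (h ▸ hcM)
      obtain ⟨N, hcN, hpN⟩ := line_exists hcp
      exact hno N (fixline hcp hc hp hcN hpN) hpN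
    -- every point other than p is fixed
    have step2 : ∀ q : PGPoint 2 K, q ≠ p → θ.ptMap q = q := by
      intro q hqp
      obtain ⟨M, N, hMN, hqM, hqN, hpM, hpN⟩ := two_lines_through_off (Ne.symm hqp)
      exact fixpt hMN (step1 M hpM) (step1 N hpN) hqM hqN
    refine Or.inl ⟨p, hp, ?_⟩
    intro H hpH
    obtain ⟨a, b, hab, haH, hbH, hap, hbp⟩ := two_points_on_ne H p
    exact fixline hab (step2 a hap) (step2 b hbp) haH hbH
  -- Remaining case: Baer-type conclusion
  push_neg at hcase1 hcase2
  refine Or.inr ⟨?_, ?_⟩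
  · intro H
    by_cases hH : θ.hypMap H = H
    · obtain ⟨x, hx, hxH⟩ := hcase1 H hH
      exact ⟨x, hx, hxH⟩
    · obtain ⟨c, hcH, hcH', hc⟩ := hpoints H hH
      exact ⟨c, hc, hcH⟩
  · intro p
    by_cases hp : θ.ptMap p = p
    · obtain ⟨M, hM, hpM⟩ := hcase2 p hp
      exact ⟨M, hM, hpM⟩
    · obtain ⟨H, hpH, hpH', hH⟩ := hlines p hp
      exact ⟨H, hH, hpH⟩
end
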